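/- Let 𝒞 be a maximal collection of pairwise weakly separated k-element subsets of {1,…,n}. Suppose i < s < j < t are elements of {1,…,n} and I ⊆ {1,…,n} ∖ {i,s,j,t} with |I| = k − 2, such that I∪{i,s}, I∪{s,j}, I∪{j,t}, I∪{i,t} all belong to 𝒞. If I∪{i,j} ∈ 𝒞 then (𝒞 ∖ {I∪{i,j}}) ∪ {I∪{s,t}} is again a maximal collection of pairwise weakly separated k-element subsets of {1,…,n}, and if I∪{s,t} ∈ 𝒞 then (𝒞 ∖ {I∪{s,t}}) ∪ {I∪{i,j}} is again a maximal collection of pairwise weakly separated k-element subsets of {1,…,n}. -/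

import Mathlib

/-- `X ≺ Y`: every element of `X` is less than every element of `Y`. -/
def Prec (X Y : Finset ℕ) : Prop := ∀ x ∈ X, ∀ y ∈ Y, x < y

/-- Two finite subsets `I, J` of `{1,…,n}` are weakly separated: either
`|I| ≥ |J|` and `J∖I` is partitioned as `J₁ ⊔ J₂` with `J₁ ≺ I∖J ≺ J₂`, or
symmetrically with `I` and `J` interchanged. -/
def WeaklySeparated (I J : Finset ℕ) : Prop :=
  (J.card ≤ I.card ∧ ∃ J₁ J₂ : Finset ℕ, Disjoint J₁ J₂ ∧ J₁ ∪ J₂ = J \ I ∧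
      Prec J₁ (I \ J) ∧ Prec (I \ J) J₂) ∨
  (I.card ≤ J.card ∧ ∃ I₁ I₂ : Finset ℕ, Disjoint I₁ I₂ ∧ I₁ ∪ I₂ = I \ J ∧
      Prec I₁ (J \ I) ∧ Prec (J \ I) I₂)

/-- `I` is a `k`-element subset of `{1,…,n}`. -/
def IsKSubset (n k : ℕ) (I : Finset ℕ) : Prop := I ⊆ Finset.Icc 1 n ∧ I.card = k

/-- `𝒞` is a maximal collection of pairwise weakly separated `k`-subsets of `{1,…,n}`:
every member is a `k`-subset of `{1,…,n}`, any two members are weakly separated, and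
any `k`-subset of `{1,…,n}` weakly separated from all members already belongs to `𝒞`. -/
def MaximalWS (n k : ℕ) (𝒞 : Finset (Finset ℕ)) : Prop :=
  (∀ I ∈ 𝒞, IsKSubset n k I) ∧
  (∀ I ∈ 𝒞, ∀ J ∈ 𝒞, WeaklySeparated I J) ∧
  (∀ J, IsKSubset n k J → (∀ I ∈ 𝒞, WeaklySeparated I J) → J ∈ 𝒞)

set_option maxHeartbeats 1000000

open Finset

/-- no element of `B` is strictly sandwiched between two elements of `A`. -/
def Sf (A B : Finset ℕ) : Prop := ∀ b ∈ B, ∀ a ∈ A, ∀ c ∈ A, a < b → b < c → False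

lemma ws_symm {I J : Finset ℕ} (h : WeaklySeparated I J) : WeaklySeparated J I := h.symm

lemma ws_refl (I : Finset ℕ) : WeaklySeparated I I := by
  left
  refine ⟨le_rfl, ∅, ∅, disjoint_empty_left _, by simp, ?_, ?_⟩ <;>
    intro x hx <;> simp at hx

lemma sf_branch {I J : Finset ℕ} :
    (∃ J₁ J₂ : Finset ℕ, Disjoint J₁ J₂ ∧ J₁ ∪ J₂ = J \ I ∧
      Prec J₁ (I \ J) ∧ Prec (I \ J) J₂) ↔ Sf (I \ J) (J \ I) := by
  classical
  constructor
  · rintro ⟨J₁, J₂, hdisj, huni, h1, h2⟩ b hb a ha c hc hab hbc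
    have : b ∈ J₁ ∪ J₂ := huni ▸ hb
    rcases mem_union.1 this with h | h
    · exact absurd (h1 b h a ha) (by omega)
    · exact absurd (h2 c hc b h) (by omega)
  · intro hsf
    classical
    refine ⟨(J \ I).filter (fun b => ∀ a ∈ I \ J, b < a),
      (J \ I).filter (fun b => ¬ ∀ a ∈ I \ J, b < a), ?_, ?_, ?_, ?_⟩
    · rw [disjoint_left]
      intro x hx1 hx2
      rw [mem_filter] at hx1
      rw [mem_filter] at hx2
      exact hx2.2 hx1.2
    · ext x
      simp only [mem_union, mem_filter]
      tauto
    · intro x hx y hy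
      rw [mem_filter] at hx
      exact hx.2 y hy
    · intro y hy x hx
      rw [mem_filter] at hx
      obtain ⟨hxD, hx2⟩ := hx
      push_neg at hx2
      obtain ⟨a, ha, hax⟩ := hx2
      have hax' : a ≠ x := fun h => (mem_sdiff.1 hxD).2 (h ▸ (mem_sdiff.1 ha).1)
      by_contra hyx
      have hxy : x ≠ y := fun h => (mem_sdiff.1 hxD).2 (h ▸ (mem_sdiff.1 hy).1)
      exact hsf x hxD a ha y hy (by omega) (by omega)

lemma wseq {I J : Finset ℕ} (h : I.card = J.card) :
    WeaklySeparated I J ↔ (Sf (I \ J) (J \ I) ∨ Sf (J \ I) (I \ J)) := by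
  unfold WeaklySeparated
  rw [← sf_branch, ← sf_branch]
  constructor
  · rintro (⟨_, h⟩ | ⟨_, h⟩)
    · exact Or.inl h
    · exact Or.inr h
  · rintro (h1 | h1)
    · exact Or.inl ⟨h.ge, h1⟩
    · exact Or.inr ⟨h.le, h1⟩

def clash {C : Sort*} {A B : Finset ℕ} (h : Sf A B ∨ Sf B A) {a b c d e f : ℕ}
    (ha : a ∈ A) (hb : b ∈ B) (hc : c ∈ A) (hab : a < b) (hbc : b < c)
    (hd : d ∈ B) (he : e ∈ A) (hf : f ∈ B) (hde : d < e) (hef : e < f) : C :=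
  (h.elim (fun h1 => h1 b hb a ha c hc hab hbc)
    (fun h2 => h2 e he d hd f hf hde hef)).elim

lemma memA {K I : Finset ℕ} {a b x : ℕ} (hx : x ∈ K) (hxI : x ∉ I) (ha : x ≠ a)
    (hb : x ≠ b) : x ∈ K \ (I ∪ {a, b}) := by
  simp only [mem_sdiff, mem_union, mem_insert, mem_singleton]
  tauto

lemma memB {K I : Finset ℕ} {a b x : ℕ} (hx : x ∉ K) (h : x ∈ I ∨ x = a ∨ x = b) :
    x ∈ (I ∪ {a, b}) \ K := by
  simp only [mem_sdiff, mem_union, mem_insert, mem_singleton]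
  tauto

lemma cardIab {I : Finset ℕ} {a b : ℕ} (ha : a ∉ I) (hb : b ∉ I) (hab : a ≠ b) :
    (I ∪ {a, b}).card = I.card + 2 := by
  have h1 : I ∪ {a, b} = insert a (insert b I) := by
    ext x
    simp only [mem_union, mem_insert, mem_singleton]
    tauto
  rw [h1, card_insert_of_notMem (by simp [hab, ha]), card_insert_of_notMem hb]

example : True := trivial

/-- An edge `I ∪ {a,b}` is weakly separated from `K` (in `Sf` form). -/
def EdgeOK (K I : Finset ℕ) (a b : ℕ) : Prop :=
  Sf (K \ (I ∪ {a, b})) ((I ∪ {a, b}) \ K) ∨ Sf ((I ∪ {a, b}) \ K) (K \ (I ∪ {a, b}))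

structure Ctx (i s j t : ℕ) (I K : Finset ℕ) : Prop where
  his : i < s
  hsj : s < j
  hjt : j < t
  hiI : i ∉ I
  hsI : s ∉ I
  hjI : j ∉ I
  htI : t ∉ I
  hcard : K.card = I.card + 2
  e1 : EdgeOK K I i s
  e2 : EdgeOK K I s j
  e3 : EdgeOK K I j t
  e4 : EdgeOK K I i t

lemma cardPQ {i s j t : ℕ} {I K : Finset ℕ} (C : Ctx i s j t I K) :
    (K \ (I ∪ {i, s, j, t})).card + (K ∩ ({i, s, j, t} : Finset ℕ)).card
      = (I \ K).card + 2 := by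
  obtain ⟨his, hsj, hjt, hiI, hsI, hjI, htI, hcard, -, -, -, -⟩ := C
  have h1 : (K ∩ (I ∪ {i, s, j, t})).card + (K \ (I ∪ {i, s, j, t})).card = K.card :=
    card_inter_add_card_sdiff K _
  have h2 : K ∩ (I ∪ {i, s, j, t}) = (K ∩ I) ∪ (K ∩ {i, s, j, t}) :=
    inter_union_distrib_left K _ _
  have h3 : Disjoint (K ∩ I) (K ∩ ({i, s, j, t} : Finset ℕ)) := by
    rw [disjoint_left]
    intro x hx1 hx2
    simp only [mem_inter, mem_insert, mem_singleton] at hx1 hx2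
    rcases hx2.2 with rfl | rfl | rfl | rfl
    · exact hiI hx1.2
    · exact hsI hx1.2
    · exact hjI hx1.2
    · exact htI hx1.2
  have h4 : ((K ∩ I) ∪ (K ∩ ({i, s, j, t} : Finset ℕ))).card
      = (K ∩ I).card + (K ∩ ({i, s, j, t} : Finset ℕ)).card := card_union_of_disjoint h3
  have h5 : (I ∩ K).card + (I \ K).card = I.card := card_inter_add_card_sdiff I K
  have h6 : K ∩ I = I ∩ K := inter_comm K I
  rw [h2, h4, h6] at h1
  omega

lemma card3le {b c d : ℕ} : ({b, c, d} : Finset ℕ).card ≤ 3 := by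
  refine le_trans (card_insert_le _ _) ?_
  have := card_insert_le c ({d} : Finset ℕ)
  simp only [card_singleton] at this
  omega

lemma cardS_lei {K : Finset ℕ} {i s j t : ℕ} (h : i ∉ K) :
    (K ∩ ({i, s, j, t} : Finset ℕ)).card ≤ 3 := by
  refine le_trans (card_le_card (fun x hx => ?_)) (card3le (b := s) (c := j) (d := t))
  simp only [mem_inter, mem_insert, mem_singleton] at hx ⊢
  rcases hx.1 with h1
  rcases hx.2 with rfl | rfl | rfl | rfl
  · exact absurd h1 h
  · tauto
  · tauto
  · tauto

lemma cardS_lej {K : Finset ℕ} {i s j t : ℕ} (h : j ∉ K) :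
    (K ∩ ({i, s, j, t} : Finset ℕ)).card ≤ 3 := by
  refine le_trans (card_le_card (fun x hx => ?_)) (card3le (b := i) (c := s) (d := t))
  simp only [mem_inter, mem_insert, mem_singleton] at hx ⊢
  rcases hx.1 with h1
  rcases hx.2 with rfl | rfl | rfl | rfl
  · tauto
  · tauto
  · exact absurd h1 h
  · tauto

lemma cardS_leij {K : Finset ℕ} {i s j t : ℕ} (hi : i ∉ K) (hj : j ∉ K) :
    (K ∩ ({i, s, j, t} : Finset ℕ)).card ≤ 2 := by
  have hsub : K ∩ ({i, s, j, t} : Finset ℕ) ⊆ {s, t} := by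
    intro x hx
    simp only [mem_inter, mem_insert, mem_singleton] at hx ⊢
    rcases hx.1 with h1
    rcases hx.2 with rfl | rfl | rfl | rfl
    · exact absurd h1 hi
    · tauto
    · exact absurd h1 hj
    · tauto
  refine le_trans (card_le_card hsub) ?_
  refine le_trans (card_insert_le _ _) ?_
  simp

lemma cardS_ges {K : Finset ℕ} {i s j t : ℕ} (hs : s ∈ K) :
    1 ≤ (K ∩ ({i, s, j, t} : Finset ℕ)).card := by
  have : s ∈ K ∩ ({i, s, j, t} : Finset ℕ) := by
    simp only [mem_inter, mem_insert, mem_singleton]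
    tauto
  exact card_pos.2 ⟨s, this⟩

lemma cardS_get {K : Finset ℕ} {i s j t : ℕ} (ht : t ∈ K) :
    1 ≤ (K ∩ ({i, s, j, t} : Finset ℕ)).card := by
  have : t ∈ K ∩ ({i, s, j, t} : Finset ℕ) := by
    simp only [mem_inter, mem_insert, mem_singleton]
    tauto
  exact card_pos.2 ⟨t, this⟩

lemma cardS_gest {K : Finset ℕ} {i s j t : ℕ} (hs : s ∈ K) (ht : t ∈ K) (hst : s ≠ t) :
    2 ≤ (K ∩ ({i, s, j, t} : Finset ℕ)).card := by
  have hsub : ({s, t} : Finset ℕ) ⊆ K ∩ ({i, s, j, t} : Finset ℕ) := by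
    intro x hx
    simp only [mem_insert, mem_singleton] at hx
    simp only [mem_inter, mem_insert, mem_singleton]
    rcases hx with rfl | rfl <;> tauto
  calc (2 : ℕ) = ({s, t} : Finset ℕ).card := (card_pair hst).symm
    _ ≤ _ := card_le_card hsub

lemma getP {i s j t : ℕ} {I K : Finset ℕ} (h : 0 < (K \ (I ∪ {i, s, j, t})).card) :
    ∃ p, p ∈ K ∧ p ∉ I ∧ p ≠ i ∧ p ≠ s ∧ p ≠ j ∧ p ≠ t := by
  obtain ⟨p, hp⟩ := card_pos.1 h
  simp only [mem_sdiff, mem_union, mem_insert, mem_singleton] at hp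
  push_neg at hp
  exact ⟨p, hp.1, hp.2.1, hp.2.2⟩

lemma cardQ2 {I K : Finset ℕ} {x z : ℕ} (hx : x ∈ I) (hxK : x ∉ K) (hz : z ∈ I)
    (hzK : z ∉ K) (hxz : x ≠ z) : 2 ≤ (I \ K).card := by
  have hsub : ({x, z} : Finset ℕ) ⊆ I \ K := by
    intro y hy
    simp only [mem_insert, mem_singleton] at hy
    rcases hy with rfl | rfl <;> simp [mem_sdiff, hx, hxK, hz, hzK]
  calc (2 : ℕ) = ({x, z} : Finset ℕ).card := (card_pair hxz).symm
    _ ≤ _ := card_le_card hsub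

lemma cardQ1 {I K : Finset ℕ} {x : ℕ} (hx : x ∈ I) (hxK : x ∉ K) : 1 ≤ (I \ K).card :=
  card_pos.2 ⟨x, mem_sdiff.2 ⟨hx, hxK⟩⟩

lemma cardP2 {i s j t : ℕ} {I K : Finset ℕ} {x z : ℕ}
    (hx : x ∈ K \ (I ∪ {i, s, j, t})) (hz : z ∈ K \ (I ∪ {i, s, j, t})) (hxz : x ≠ z) :
    2 ≤ (K \ (I ∪ {i, s, j, t})).card := by
  have hsub : ({x, z} : Finset ℕ) ⊆ K \ (I ∪ {i, s, j, t}) := by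
    intro y hy
    simp only [mem_insert, mem_singleton] at hy
    rcases hy with rfl | rfl <;> assumption
  calc (2 : ℕ) = ({x, z} : Finset ℕ).card := (card_pair hxz).symm
    _ ≤ _ := card_le_card hsub

lemma memP {i s j t : ℕ} {I K : Finset ℕ} {x : ℕ} (hx : x ∈ K) (hxI : x ∉ I)
    (h1 : x ≠ i) (h2 : x ≠ s) (h3 : x ≠ j) (h4 : x ≠ t) : x ∈ K \ (I ∪ {i, s, j, t}) := by
  simp only [mem_sdiff, mem_union, mem_insert, mem_singleton]
  tauto
/-- If `p < q < p'` with `p,p'` in the free part of `K` and `q ∈ I \ K`, then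
a `(B₀,A₀,B₀)` sandwich `(d,e,f)` is impossible. -/
lemma noPQP {i s j t : ℕ} {I K : Finset ℕ} (C : Ctx i s j t I K)
    {d e f p q p' : ℕ}
    (hdK : d ∉ K) (hdB : d ∈ I ∨ d = i ∨ d = j)
    (heK : e ∈ K) (heI : e ∉ I) (hei : e ≠ i) (hej : e ≠ j)
    (hfK : f ∉ K) (hfB : f ∈ I ∨ f = i ∨ f = j)
    (hde : d < e) (hef : e < f)
    (hpK : p ∈ K) (hpI : p ∉ I) (hpi : p ≠ i) (hps : p ≠ s) (hpj : p ≠ j) (hpt : p ≠ t)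
    (hqI : q ∈ I) (hqK : q ∉ K)
    (hp'K : p' ∈ K) (hp'I : p' ∉ I) (hp'i : p' ≠ i) (hp's : p' ≠ s) (hp'j : p' ≠ j)
    (hp't : p' ≠ t) (hpq : p < q) (hqp' : q < p') : False := by
  obtain ⟨his, hsj, hjt, hiI, hsI, hjI, htI, hcard, e1, e2, e3, e4⟩ := C
  have p1 : p ∈ K \ (I ∪ {i, s}) := memA hpK hpI hpi hps
  have p2 : p ∈ K \ (I ∪ {s, j}) := memA hpK hpI hps hpj
  have p3 : p ∈ K \ (I ∪ {j, t}) := memA hpK hpI hpj hpt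
  have p4 : p ∈ K \ (I ∪ {i, t}) := memA hpK hpI hpi hpt
  have r1 : p' ∈ K \ (I ∪ {i, s}) := memA hp'K hp'I hp'i hp's
  have r2 : p' ∈ K \ (I ∪ {s, j}) := memA hp'K hp'I hp's hp'j
  have r3 : p' ∈ K \ (I ∪ {j, t}) := memA hp'K hp'I hp'j hp't
  have r4 : p' ∈ K \ (I ∪ {i, t}) := memA hp'K hp'I hp'i hp't
  have q1 : q ∈ (I ∪ {i, s}) \ K := memB hqK (Or.inl hqI)
  have q2 : q ∈ (I ∪ {s, j}) \ K := memB hqK (Or.inl hqI)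
  have q3 : q ∈ (I ∪ {j, t}) \ K := memB hqK (Or.inl hqI)
  have q4 : q ∈ (I ∪ {i, t}) \ K := memB hqK (Or.inl hqI)
  by_cases hes : e = s
  · subst hes
    have s3 : e ∈ K \ (I ∪ {j, t}) := memA heK hsI (by omega) (by omega)
    have s4 : e ∈ K \ (I ∪ {i, t}) := memA heK hsI (by omega) (by omega)
    rcases hdB with hdI | rfl | rfl
    · rcases hfB with hfI | rfl | rfl
      · exact clash e4 p4 q4 r4 hpq hqp' (memB hdK (Or.inl hdI)) s4 (memB hfK (Or.inl hfI)) hde hef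
      · omega
      · exact clash e3 p3 q3 r3 hpq hqp' (memB hdK (Or.inl hdI)) s3 (memB hfK (Or.inr (Or.inl rfl))) hde hef
    · rcases hfB with hfI | rfl | rfl
      · exact clash e4 p4 q4 r4 hpq hqp' (memB hdK (Or.inr (Or.inl rfl))) s4 (memB hfK (Or.inl hfI)) hde hef
      · omega
      · have hqe : q ≠ e := fun h => hsI (h ▸ hqI)
        rcases Nat.lt_or_ge q e with hlt | hge
        · exact clash e3 p3 q3 r3 hpq hqp' q3 s3 (memB hfK (Or.inr (Or.inl rfl))) hlt hef
        · exact clash e4 p4 q4 r4 hpq hqp' (memB hdK (Or.inr (Or.inl rfl))) s4 q4 hde (by omega)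
    · omega
  · by_cases het : e = t
    · subst het
      have t1 : e ∈ K \ (I ∪ {i, s}) := memA heK htI (by omega) (by omega)
      have t2 : e ∈ K \ (I ∪ {s, j}) := memA heK htI (by omega) (by omega)
      rcases hfB with hfI | rfl | rfl
      · rcases hdB with hdI | rfl | rfl
        · exact clash e1 p1 q1 r1 hpq hqp' (memB hdK (Or.inl hdI)) t1 (memB hfK (Or.inl hfI)) hde hef
        · exact clash e1 p1 q1 r1 hpq hqp' (memB hdK (Or.inr (Or.inl rfl))) t1 (memB hfK (Or.inl hfI)) hde hef
        · exact clash e2 p2 q2 r2 hpq hqp' (memB hdK (Or.inr (Or.inr rfl))) t2 (memB hfK (Or.inl hfI)) hde hef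
      · omega
      · omega
    · -- e is a free element of K
      have eA1 : e ∈ K \ (I ∪ {i, s}) := memA heK heI hei hes
      have eA2 : e ∈ K \ (I ∪ {s, j}) := memA heK heI hes hej
      rcases hdB with hdI | rfl | rfl
      · rcases hfB with hfI | rfl | rfl
        · exact clash e1 p1 q1 r1 hpq hqp' (memB hdK (Or.inl hdI)) eA1 (memB hfK (Or.inl hfI)) hde hef
        · exact clash e1 p1 q1 r1 hpq hqp' (memB hdK (Or.inl hdI)) eA1 (memB hfK (Or.inr (Or.inl rfl))) hde hef
        · exact clash e2 p2 q2 r2 hpq hqp' (memB hdK (Or.inl hdI)) eA2 (memB hfK (Or.inr (Or.inr rfl))) hde hef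
      · rcases hfB with hfI | rfl | rfl
        · exact clash e1 p1 q1 r1 hpq hqp' (memB hdK (Or.inr (Or.inl rfl))) eA1 (memB hfK (Or.inl hfI)) hde hef
        · omega
        · have hqe : q ≠ e := fun h => heI (h ▸ hqI)
          rcases Nat.lt_or_ge q e with hlt | hge
          · exact clash e2 p2 q2 r2 hpq hqp' q2 eA2 (memB hfK (Or.inr (Or.inr rfl))) hlt hef
          · exact clash e1 p1 q1 r1 hpq hqp' (memB hdK (Or.inr (Or.inl rfl))) eA1 q1 hde (by omega)
      · rcases hfB with hfI | rfl | rfl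
        · exact clash e2 p2 q2 r2 hpq hqp' (memB hdK (Or.inr (Or.inr rfl))) eA2 (memB hfK (Or.inl hfI)) hde hef
        · omega
        · omega

/-- If `q < p < q'` with `q,q'` in `I \ K` and `p` in the free part of `K`, then
an `(A₀,B₀,A₀)` sandwich `(a,b,c)` is impossible. -/
lemma noQPQ {i s j t : ℕ} {I K : Finset ℕ} (C : Ctx i s j t I K)
    {a b c p q q' : ℕ}
    (haK : a ∈ K) (haI : a ∉ I) (hai : a ≠ i) (haj : a ≠ j)
    (hbK : b ∉ K) (hbB : b ∈ I ∨ b = i ∨ b = j)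
    (hcK : c ∈ K) (hcI : c ∉ I) (hci : c ≠ i) (hcj : c ≠ j)
    (hab : a < b) (hbc : b < c)
    (hpK : p ∈ K) (hpI : p ∉ I) (hpi : p ≠ i) (hps : p ≠ s) (hpj : p ≠ j) (hpt : p ≠ t)
    (hqI : q ∈ I) (hqK : q ∉ K)
    (hq'I : q' ∈ I) (hq'K : q' ∉ K)
    (hqp : q < p) (hpq' : p < q') : False := by
  obtain ⟨his, hsj, hjt, hiI, hsI, hjI, htI, hcard, e1, e2, e3, e4⟩ := C
  have p1 : p ∈ K \ (I ∪ {i, s}) := memA hpK hpI hpi hps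
  have p2 : p ∈ K \ (I ∪ {s, j}) := memA hpK hpI hps hpj
  have p3 : p ∈ K \ (I ∪ {j, t}) := memA hpK hpI hpj hpt
  have p4 : p ∈ K \ (I ∪ {i, t}) := memA hpK hpI hpi hpt
  have q1 : q ∈ (I ∪ {i, s}) \ K := memB hqK (Or.inl hqI)
  have q2 : q ∈ (I ∪ {s, j}) \ K := memB hqK (Or.inl hqI)
  have q3 : q ∈ (I ∪ {j, t}) \ K := memB hqK (Or.inl hqI)
  have q4 : q ∈ (I ∪ {i, t}) \ K := memB hqK (Or.inl hqI)
  have u1 : q' ∈ (I ∪ {i, s}) \ K := memB hq'K (Or.inl hq'I)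
  have u2 : q' ∈ (I ∪ {s, j}) \ K := memB hq'K (Or.inl hq'I)
  have u3 : q' ∈ (I ∪ {j, t}) \ K := memB hq'K (Or.inl hq'I)
  have u4 : q' ∈ (I ∪ {i, t}) \ K := memB hq'K (Or.inl hq'I)
  rcases hbB with hbI | hbi | hbj
  · have b1 : b ∈ (I ∪ {i, s}) \ K := memB hbK (Or.inl hbI)
    have b2 : b ∈ (I ∪ {s, j}) \ K := memB hbK (Or.inl hbI)
    have b3 : b ∈ (I ∪ {j, t}) \ K := memB hbK (Or.inl hbI)
    have b4 : b ∈ (I ∪ {i, t}) \ K := memB hbK (Or.inl hbI)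
    by_cases has : a = s
    · have a4 : a ∈ K \ (I ∪ {i, t}) := memA haK haI hai (by omega)
      have a3 : a ∈ K \ (I ∪ {j, t}) := memA haK haI haj (by omega)
      by_cases hcs : c = s
      · omega
      by_cases hct : c = t
      · have hpb : p ≠ b := fun h => hbK (h ▸ hpK)
        rcases Nat.lt_or_ge p b with hlt | hge
        · exact clash e1 p1 b1 (memA hcK hcI hci (by omega)) hlt hbc q1 p1 u1 hqp hpq'
        · exact clash e4 a4 b4 p4 hab (by omega) q4 p4 u4 hqp hpq'
      · exact clash e4 a4 b4 (memA hcK hcI hci hct) hab hbc q4 p4 u4 hqp hpq'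
    · by_cases hat : a = t
      · have a1 : a ∈ K \ (I ∪ {i, s}) := memA haK haI hai (by omega)
        by_cases hcs : c = s
        · omega
        by_cases hct : c = t
        · omega
        · exact clash e1 a1 b1 (memA hcK hcI hci hcs) hab hbc q1 p1 u1 hqp hpq'
      · have a4 : a ∈ K \ (I ∪ {i, t}) := memA haK haI hai hat
        have a1 : a ∈ K \ (I ∪ {i, s}) := memA haK haI hai has
        by_cases hcs : c = s
        · exact clash e4 a4 b4 (memA hcK hcI hci (by omega)) hab hbc q4 p4 u4 hqp hpq'
        · by_cases hct : c = t
          · exact clash e1 a1 b1 (memA hcK hcI hci hcs) hab hbc q1 p1 u1 hqp hpq'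
          · exact clash e1 a1 b1 (memA hcK hcI hci hcs) hab hbc q1 p1 u1 hqp hpq'
  · -- b = i
    have bi1 : b ∈ (I ∪ {i, s}) \ K := memB hbK (Or.inr (Or.inl hbi))
    have bi4 : b ∈ (I ∪ {i, t}) \ K := memB hbK (Or.inr (Or.inl hbi))
    by_cases has : a = s
    · omega
    by_cases hat : a = t
    · omega
    have a1 : a ∈ K \ (I ∪ {i, s}) := memA haK haI hai has
    have a4 : a ∈ K \ (I ∪ {i, t}) := memA haK haI hai hat
    by_cases hcs : c = s
    · exact clash e4 a4 bi4 (memA hcK hcI hci (by omega)) hab hbc q4 p4 u4 hqp hpq'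
    by_cases hct : c = t
    · exact clash e1 a1 bi1 (memA hcK hcI hci hcs) hab hbc q1 p1 u1 hqp hpq'
    · exact clash e1 a1 bi1 (memA hcK hcI hci hcs) hab hbc q1 p1 u1 hqp hpq'
  · -- b = j
    have bj2 : b ∈ (I ∪ {s, j}) \ K := memB hbK (Or.inr (Or.inr hbj))
    have bj3 : b ∈ (I ∪ {j, t}) \ K := memB hbK (Or.inr (Or.inl hbj))
    by_cases hat : a = t
    · omega
    by_cases has : a = s
    · have a3 : a ∈ K \ (I ∪ {j, t}) := memA haK haI haj (by omega)
      by_cases hcs : c = s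
      · omega
      by_cases hct : c = t
      · have hpb : p ≠ b := fun h => hbK (h ▸ hpK)
        rcases Nat.lt_or_ge p b with hlt | hge
        · exact clash e2 p2 bj2 (memA hcK hcI (by omega) hcj) hlt hbc q2 p2 u2 hqp hpq'
        · exact clash e3 a3 bj3 p3 hab (by omega) q3 p3 u3 hqp hpq'
      · exact clash e3 a3 bj3 (memA hcK hcI hcj hct) hab hbc q3 p3 u3 hqp hpq'
    · have a2 : a ∈ K \ (I ∪ {s, j}) := memA haK haI has haj
      by_cases hcs : c = s
      · omega
      by_cases hct : c = t
      · exact clash e2 a2 bj2 (memA hcK hcI (by omega) hcj) hab hbc q2 p2 u2 hqp hpq'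
      · exact clash e2 a2 bj2 (memA hcK hcI hcs hcj) hab hbc q2 p2 u2 hqp hpq'
section Hard

variable {i s j t : ℕ} {I K : Finset ℕ}

lemma hardC1a1 (C : Ctx i s j t I K) {x z : ℕ}
    (hsK : s ∈ K) (htK : t ∈ K)
    (hxI : x ∈ I) (hxK : x ∉ K) (hzI : z ∈ I) (hzK : z ∉ K)
    (hsx : s < x) (hxt : x < t) (htz : t < z) : False := by
  obtain ⟨his, hsj, hjt, hiI, hsI, hjI, htI, hcard, e1, e2, e3, e4⟩ := C
  have hPQ : (K \ (I ∪ {i, s, j, t})).card + (K ∩ ({i, s, j, t} : Finset ℕ)).card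
      = (I \ K).card + 2 :=
    cardPQ ⟨his, hsj, hjt, hiI, hsI, hjI, htI, hcard, e1, e2, e3, e4⟩
  have tA2 : t ∈ K \ (I ∪ {s, j}) := memA htK htI (by omega) (by omega)
  have xB2 : x ∈ (I ∪ {s, j}) \ K := memB hxK (Or.inl hxI)
  have zB2 : z ∈ (I ∪ {s, j}) \ K := memB hzK (Or.inl hzI)
  have tA1 : t ∈ K \ (I ∪ {i, s}) := memA htK htI (by omega) (by omega)
  have xB1 : x ∈ (I ∪ {i, s}) \ K := memB hxK (Or.inl hxI)
  have zB1 : z ∈ (I ∪ {i, s}) \ K := memB hzK (Or.inl hzI)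
  by_cases hiK : i ∈ K
  · exact clash e2 (memA hiK hiI (by omega) (by omega)) xB2 tA2 (by omega) hxt
      xB2 tA2 zB2 hxt htz
  · have h3 := cardS_lei (s := s) (j := j) (t := t) hiK
    have h2 := cardQ2 hxI hxK hzI hzK (by omega)
    obtain ⟨p, hpK, hpI, hpi, hps, hpj, hpt⟩ := getP (i := i) (s := s) (j := j) (t := t)
      (I := I) (K := K) (by omega)
    have hpx : p ≠ x := fun h => hxK (h ▸ hpK)
    have hpz : p ≠ z := fun h => hzK (h ▸ hpK)
    rcases Nat.lt_or_ge p x with h | h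
    · exact clash e1 (memA hpK hpI hpi hps) xB1 tA1 h hxt xB1 tA1 zB1 hxt htz
    · rcases Nat.lt_or_ge p z with h' | h'
      · exact noQPQ ⟨his, hsj, hjt, hiI, hsI, hjI, htI, hcard, e1, e2, e3, e4⟩
          hsK hsI (by omega) (by omega) hxK (Or.inl hxI) htK htI (by omega) (by omega)
          hsx hxt hpK hpI hpi hps hpj hpt hxI hxK hzI hzK (by omega) h'
      · exact clash e1 tA1 zB1 (memA hpK hpI hpi hps) htz (by omega) xB1 tA1 zB1 hxt htz

lemma hardC1a2 (C : Ctx i s j t I K) {z : ℕ}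
    (hsK : s ∈ K) (htK : t ∈ K) (hjK : j ∉ K)
    (hzI : z ∈ I) (hzK : z ∉ K) (htz : t < z) : False := by
  obtain ⟨his, hsj, hjt, hiI, hsI, hjI, htI, hcard, e1, e2, e3, e4⟩ := C
  have hPQ : (K \ (I ∪ {i, s, j, t})).card + (K ∩ ({i, s, j, t} : Finset ℕ)).card
      = (I \ K).card + 2 :=
    cardPQ ⟨his, hsj, hjt, hiI, hsI, hjI, htI, hcard, e1, e2, e3, e4⟩
  have tA2 : t ∈ K \ (I ∪ {s, j}) := memA htK htI (by omega) (by omega)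
  have jB2 : j ∈ (I ∪ {s, j}) \ K := memB hjK (Or.inr (Or.inr rfl))
  have zB2 : z ∈ (I ∪ {s, j}) \ K := memB hzK (Or.inl hzI)
  by_cases hiK : i ∈ K
  · exact clash e2 (memA hiK hiI (by omega) (by omega)) jB2 tA2 (by omega) hjt
      jB2 tA2 zB2 hjt htz
  · have h3 := cardS_leij (s := s) (t := t) hiK hjK
    have h2 := cardQ1 hzI hzK
    obtain ⟨p, hpK, hpI, hpi, hps, hpj, hpt⟩ := getP (i := i) (s := s) (j := j) (t := t)
      (I := I) (K := K) (by omega)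
    have hpz : p ≠ z := fun h => hzK (h ▸ hpK)
    rcases Nat.lt_or_ge p j with h | h
    · exact clash e2 (memA hpK hpI hps hpj) jB2 tA2 h hjt jB2 tA2 zB2 hjt htz
    · rcases Nat.lt_or_ge p z with h' | h'
      · have sA3 : s ∈ K \ (I ∪ {j, t}) := memA hsK hsI (by omega) (by omega)
        have jB3 : j ∈ (I ∪ {j, t}) \ K := memB hjK (Or.inr (Or.inl rfl))
        have zB3 : z ∈ (I ∪ {j, t}) \ K := memB hzK (Or.inl hzI)
        have pA3 : p ∈ K \ (I ∪ {j, t}) := memA hpK hpI hpj hpt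
        exact clash e3 sA3 jB3 pA3 hsj (by omega) jB3 pA3 zB3 (by omega) h'
      · exact clash e2 tA2 zB2 (memA hpK hpI hps hpj) htz (by omega) jB2 tA2 zB2 hjt htz

lemma hardC1b1 (C : Ctx i s j t I K) {w y : ℕ}
    (hiK : i ∉ K) (hjK : j ∉ K)
    (hwK : w ∈ K) (hwI : w ∉ I) (hw1 : w ≠ i) (hw2 : w ≠ s) (hw3 : w ≠ j) (hw4 : w ≠ t)
    (hyK : y ∈ K) (hyI : y ∉ I) (hy1 : y ≠ i) (hy2 : y ≠ s) (hy3 : y ≠ j) (hy4 : y ≠ t)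
    (hwi : w < i) (hiy : i < y) (hyj : y < j) : False := by
  obtain ⟨his, hsj, hjt, hiI, hsI, hjI, htI, hcard, e1, e2, e3, e4⟩ := C
  have hPQ : (K \ (I ∪ {i, s, j, t})).card + (K ∩ ({i, s, j, t} : Finset ℕ)).card
      = (I \ K).card + 2 :=
    cardPQ ⟨his, hsj, hjt, hiI, hsI, hjI, htI, hcard, e1, e2, e3, e4⟩
  have wA1 : w ∈ K \ (I ∪ {i, s}) := memA hwK hwI hw1 hw2
  have yA1 : y ∈ K \ (I ∪ {i, s}) := memA hyK hyI hy1 hy2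
  have iB1 : i ∈ (I ∪ {i, s}) \ K := memB hiK (Or.inr (Or.inl rfl))
  rcases (I \ K).eq_empty_or_nonempty with hQ | ⟨q, hq⟩
  · have hQ0 : (I \ K).card = 0 := by rw [hQ]; exact card_empty
    have hP2 : 2 ≤ (K \ (I ∪ {i, s, j, t})).card :=
      cardP2 (memP hwK hwI hw1 hw2 hw3 hw4) (memP hyK hyI hy1 hy2 hy3 hy4) (by omega)
    have hKS : K ∩ ({i, s, j, t} : Finset ℕ) = ∅ := card_eq_zero.1 (by omega)
    have hsK : s ∉ K := by
      intro h
      have : s ∈ K ∩ ({i, s, j, t} : Finset ℕ) := mem_inter.2 ⟨h, by simp⟩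
      rw [hKS] at this
      exact absurd this (notMem_empty s)
    have htK : t ∉ K := by
      intro h
      have : t ∈ K ∩ ({i, s, j, t} : Finset ℕ) := mem_inter.2 ⟨h, by simp⟩
      rw [hKS] at this
      exact absurd this (notMem_empty t)
    rcases Nat.lt_or_ge y s with h | h
    · exact clash e1 wA1 iB1 yA1 hwi hiy iB1 yA1 (memB hsK (Or.inr (Or.inr rfl))) hiy h
    · have wA4 : w ∈ K \ (I ∪ {i, t}) := memA hwK hwI hw1 hw4
      have yA4 : y ∈ K \ (I ∪ {i, t}) := memA hyK hyI hy1 hy4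
      have iB4 : i ∈ (I ∪ {i, t}) \ K := memB hiK (Or.inr (Or.inl rfl))
      exact clash e4 wA4 iB4 yA4 hwi hiy iB4 yA4 (memB htK (Or.inr (Or.inr rfl))) hiy
        (by omega)
  · obtain ⟨hqI, hqK⟩ := mem_sdiff.1 hq
    have hqw : q ≠ w := fun h => hqK (h ▸ hwK)
    have hqy : q ≠ y := fun h => hqK (h ▸ hyK)
    rcases Nat.lt_or_ge q w with h | h
    · exact clash e1 wA1 iB1 yA1 hwi hiy (memB hqK (Or.inl hqI)) wA1 iB1 h hwi
    · rcases Nat.lt_or_ge q y with h' | h'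
      · exact noPQP ⟨his, hsj, hjt, hiI, hsI, hjI, htI, hcard, e1, e2, e3, e4⟩
          hiK (Or.inr (Or.inl rfl)) hyK hyI hy1 hy3 hjK (Or.inr (Or.inr rfl)) hiy hyj
          hwK hwI hw1 hw2 hw3 hw4 hqI hqK hyK hyI hy1 hy2 hy3 hy4 (by omega) h'
      · exact clash e1 wA1 iB1 yA1 hwi hiy iB1 yA1 (memB hqK (Or.inl hqI)) hiy (by omega)

lemma hardC1b2 (C : Ctx i s j t I K) {w : ℕ}
    (hiK : i ∉ K) (hjK : j ∉ K) (hsK : s ∈ K)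
    (hwK : w ∈ K) (hwI : w ∉ I) (hw1 : w ≠ i) (hw2 : w ≠ s) (hw3 : w ≠ j) (hw4 : w ≠ t)
    (hwi : w < i) : False := by
  obtain ⟨his, hsj, hjt, hiI, hsI, hjI, htI, hcard, e1, e2, e3, e4⟩ := C
  have hPQ : (K \ (I ∪ {i, s, j, t})).card + (K ∩ ({i, s, j, t} : Finset ℕ)).card
      = (I \ K).card + 2 :=
    cardPQ ⟨his, hsj, hjt, hiI, hsI, hjI, htI, hcard, e1, e2, e3, e4⟩
  have wA4 : w ∈ K \ (I ∪ {i, t}) := memA hwK hwI hw1 hw4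
  have iB4 : i ∈ (I ∪ {i, t}) \ K := memB hiK (Or.inr (Or.inl rfl))
  have sA4 : s ∈ K \ (I ∪ {i, t}) := memA hsK hsI (by omega) (by omega)
  rcases (I \ K).eq_empty_or_nonempty with hQ | ⟨q, hq⟩
  · have hQ0 : (I \ K).card = 0 := by rw [hQ]; exact card_empty
    have hP1 : 1 ≤ (K \ (I ∪ {i, s, j, t})).card :=
      card_pos.2 ⟨w, memP hwK hwI hw1 hw2 hw3 hw4⟩
    have htK : t ∉ K := by
      intro h
      have := cardS_gest (i := i) (j := j) hsK h (by omega)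
      omega
    exact clash e4 wA4 iB4 sA4 hwi his iB4 sA4 (memB htK (Or.inr (Or.inr rfl))) his
      (by omega)
  · obtain ⟨hqI, hqK⟩ := mem_sdiff.1 hq
    have hqw : q ≠ w := fun h => hqK (h ▸ hwK)
    have hqs : q ≠ s := fun h => hsI (h ▸ hqI)
    have qB4 : q ∈ (I ∪ {i, t}) \ K := memB hqK (Or.inl hqI)
    rcases Nat.lt_or_ge q w with h | h
    · exact clash e4 wA4 iB4 sA4 hwi his qB4 wA4 iB4 h hwi
    · rcases Nat.lt_or_ge q s with h' | h'
      · have wA3 : w ∈ K \ (I ∪ {j, t}) := memA hwK hwI hw3 hw4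
        have sA3 : s ∈ K \ (I ∪ {j, t}) := memA hsK hsI (by omega) (by omega)
        have qB3 : q ∈ (I ∪ {j, t}) \ K := memB hqK (Or.inl hqI)
        have jB3 : j ∈ (I ∪ {j, t}) \ K := memB hjK (Or.inr (Or.inl rfl))
        exact clash e3 wA3 qB3 sA3 (by omega) h' qB3 sA3 jB3 h' hsj
      · exact clash e4 wA4 iB4 sA4 hwi his iB4 sA4 qB4 his (by omega)

lemma hardC2a1 (C : Ctx i s j t I K) {w y : ℕ}
    (hsK : s ∈ K) (htK : t ∈ K)
    (hwI : w ∈ I) (hwK : w ∉ K) (hyI : y ∈ I) (hyK : y ∉ K)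
    (hws : w < s) (hsy : s < y) (hyt : y < t) : False := by
  obtain ⟨his, hsj, hjt, hiI, hsI, hjI, htI, hcard, e1, e2, e3, e4⟩ := C
  have hPQ : (K \ (I ∪ {i, s, j, t})).card + (K ∩ ({i, s, j, t} : Finset ℕ)).card
      = (I \ K).card + 2 :=
    cardPQ ⟨his, hsj, hjt, hiI, hsI, hjI, htI, hcard, e1, e2, e3, e4⟩
  have sA4 : s ∈ K \ (I ∪ {i, t}) := memA hsK hsI (by omega) (by omega)
  have wB4 : w ∈ (I ∪ {i, t}) \ K := memB hwK (Or.inl hwI)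
  have yB4 : y ∈ (I ∪ {i, t}) \ K := memB hyK (Or.inl hyI)
  rcases (K \ (I ∪ {i, s, j, t})).eq_empty_or_nonempty with hP | ⟨p, hp⟩
  · have hP0 : (K \ (I ∪ {i, s, j, t})).card = 0 := by rw [hP]; exact card_empty
    have hQ2 := cardQ2 hwI hwK hyI hyK (by omega)
    have hiK : i ∈ K := by
      by_contra hiK
      have := cardS_lei (s := s) (j := j) (t := t) hiK
      omega
    have hwi : w ≠ i := fun h => hiI (h ▸ hwI)
    rcases Nat.lt_or_ge w i with h | h
    · have iA2 : i ∈ K \ (I ∪ {s, j}) := memA hiK hiI (by omega) (by omega)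
      have tA2 : t ∈ K \ (I ∪ {s, j}) := memA htK htI (by omega) (by omega)
      have wB2 : w ∈ (I ∪ {s, j}) \ K := memB hwK (Or.inl hwI)
      have yB2 : y ∈ (I ∪ {s, j}) \ K := memB hyK (Or.inl hyI)
      exact clash e2 iA2 yB2 tA2 (by omega) hyt wB2 iA2 yB2 h (by omega)
    · have iA3 : i ∈ K \ (I ∪ {j, t}) := memA hiK hiI (by omega) (by omega)
      have sA3 : s ∈ K \ (I ∪ {j, t}) := memA hsK hsI (by omega) (by omega)
      have wB3 : w ∈ (I ∪ {j, t}) \ K := memB hwK (Or.inl hwI)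
      have yB3 : y ∈ (I ∪ {j, t}) \ K := memB hyK (Or.inl hyI)
      exact clash e3 iA3 wB3 sA3 (by omega) hws wB3 sA3 yB3 hws hsy
  · have hpP := hp
    simp only [mem_sdiff, mem_union, mem_insert, mem_singleton] at hpP
    push_neg at hpP
    obtain ⟨hpK, hpI, hpi, hps, hpj, hpt⟩ := hpP
    have hpw : p ≠ w := fun h => hwK (h ▸ hpK)
    have hpy : p ≠ y := fun h => hyK (h ▸ hpK)
    have pA4 : p ∈ K \ (I ∪ {i, t}) := memA hpK hpI hpi hpt
    rcases Nat.lt_or_ge p w with h | h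
    · exact clash e4 pA4 wB4 sA4 h hws wB4 sA4 yB4 hws hsy
    · rcases Nat.lt_or_ge p y with h' | h'
      · exact noQPQ ⟨his, hsj, hjt, hiI, hsI, hjI, htI, hcard, e1, e2, e3, e4⟩
          hsK hsI (by omega) (by omega) hyK (Or.inl hyI) htK htI (by omega) (by omega)
          hsy hyt hpK hpI hpi hps hpj hpt hwI hwK hyI hyK (by omega) h'
      · exact clash e4 sA4 yB4 pA4 hsy (by omega) wB4 sA4 yB4 hws hsy

end Hard
section Hard2

variable {i s j t : ℕ} {I K : Finset ℕ}

lemma hardC2a2 (C : Ctx i s j t I K) {w : ℕ}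
    (hsK : s ∈ K) (htK : t ∈ K) (hjK : j ∉ K)
    (hwI : w ∈ I) (hwK : w ∉ K) (hws : w < s) : False := by
  obtain ⟨his, hsj, hjt, hiI, hsI, hjI, htI, hcard, e1, e2, e3, e4⟩ := C
  have hPQ : (K \ (I ∪ {i, s, j, t})).card + (K ∩ ({i, s, j, t} : Finset ℕ)).card
      = (I \ K).card + 2 :=
    cardPQ ⟨his, hsj, hjt, hiI, hsI, hjI, htI, hcard, e1, e2, e3, e4⟩
  have sA3 : s ∈ K \ (I ∪ {j, t}) := memA hsK hsI (by omega) (by omega)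
  have wB3 : w ∈ (I ∪ {j, t}) \ K := memB hwK (Or.inl hwI)
  have jB3 : j ∈ (I ∪ {j, t}) \ K := memB hjK (Or.inr (Or.inl rfl))
  have tA2 : t ∈ K \ (I ∪ {s, j}) := memA htK htI (by omega) (by omega)
  have jB2 : j ∈ (I ∪ {s, j}) \ K := memB hjK (Or.inr (Or.inr rfl))
  have wB2 : w ∈ (I ∪ {s, j}) \ K := memB hwK (Or.inl hwI)
  rcases (K \ (I ∪ {i, s, j, t})).eq_empty_or_nonempty with hP | ⟨p, hp⟩
  · have hP0 : (K \ (I ∪ {i, s, j, t})).card = 0 := by rw [hP]; exact card_empty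
    have hQ1 := cardQ1 hwI hwK
    have hiK : i ∈ K := by
      by_contra hiK
      have := cardS_leij (s := s) (t := t) hiK hjK
      omega
    have hwi : w ≠ i := fun h => hiI (h ▸ hwI)
    rcases Nat.lt_or_ge w i with h | h
    · have iA2 : i ∈ K \ (I ∪ {s, j}) := memA hiK hiI (by omega) (by omega)
      exact clash e2 iA2 jB2 tA2 (by omega) hjt wB2 iA2 jB2 h (by omega)
    · have iA3 : i ∈ K \ (I ∪ {j, t}) := memA hiK hiI (by omega) (by omega)
      exact clash e3 iA3 wB3 sA3 (by omega) hws wB3 sA3 jB3 hws hsj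
  · have hpP := hp
    simp only [mem_sdiff, mem_union, mem_insert, mem_singleton] at hpP
    push_neg at hpP
    obtain ⟨hpK, hpI, hpi, hps, hpj, hpt⟩ := hpP
    have hpw : p ≠ w := fun h => hwK (h ▸ hpK)
    rcases Nat.lt_or_ge p w with h | h
    · have pA3 : p ∈ K \ (I ∪ {j, t}) := memA hpK hpI hpj hpt
      exact clash e3 pA3 wB3 sA3 h hws wB3 sA3 jB3 hws hsj
    · rcases Nat.lt_or_ge p j with h' | h'
      · have pA2 : p ∈ K \ (I ∪ {s, j}) := memA hpK hpI hps hpj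
        exact clash e2 pA2 jB2 tA2 h' hjt wB2 pA2 jB2 (by omega) h'
      · have pA3 : p ∈ K \ (I ∪ {j, t}) := memA hpK hpI hpj hpt
        exact clash e3 sA3 jB3 pA3 hsj (by omega) wB3 sA3 jB3 hws hsj

lemma hardC2a3 (C : Ctx i s j t I K) {y : ℕ}
    (hsK : s ∈ K) (htK : t ∈ K) (hiK : i ∉ K)
    (hyI : y ∈ I) (hyK : y ∉ K) (hsy : s < y) (hyt : y < t) : False := by
  obtain ⟨his, hsj, hjt, hiI, hsI, hjI, htI, hcard, e1, e2, e3, e4⟩ := C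
  have hPQ : (K \ (I ∪ {i, s, j, t})).card + (K ∩ ({i, s, j, t} : Finset ℕ)).card
      = (I \ K).card + 2 :=
    cardPQ ⟨his, hsj, hjt, hiI, hsI, hjI, htI, hcard, e1, e2, e3, e4⟩
  have sA4 : s ∈ K \ (I ∪ {i, t}) := memA hsK hsI (by omega) (by omega)
  have iB4 : i ∈ (I ∪ {i, t}) \ K := memB hiK (Or.inr (Or.inl rfl))
  have yB4 : y ∈ (I ∪ {i, t}) \ K := memB hyK (Or.inl hyI)
  have tA1 : t ∈ K \ (I ∪ {i, s}) := memA htK htI (by omega) (by omega)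
  have iB1 : i ∈ (I ∪ {i, s}) \ K := memB hiK (Or.inr (Or.inl rfl))
  have yB1 : y ∈ (I ∪ {i, s}) \ K := memB hyK (Or.inl hyI)
  rcases (K \ (I ∪ {i, s, j, t})).eq_empty_or_nonempty with hP | ⟨p, hp⟩
  · have hP0 : (K \ (I ∪ {i, s, j, t})).card = 0 := by rw [hP]; exact card_empty
    have hQ1 := cardQ1 hyI hyK
    have hjK : j ∈ K := by
      by_contra hjK
      have := cardS_leij (s := s) (t := t) hiK hjK
      omega
    have hyj : y ≠ j := fun h => hjI (h ▸ hyI)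
    rcases Nat.lt_or_ge y j with h | h
    · have jA4 : j ∈ K \ (I ∪ {i, t}) := memA hjK hjI (by omega) (by omega)
      exact clash e4 sA4 yB4 jA4 hsy h iB4 sA4 yB4 his hsy
    · have jA1 : j ∈ K \ (I ∪ {i, s}) := memA hjK hjI (by omega) (by omega)
      exact clash e1 jA1 yB1 tA1 (by omega) hyt iB1 jA1 yB1 (by omega) (by omega)
  · have hpP := hp
    simp only [mem_sdiff, mem_union, mem_insert, mem_singleton] at hpP
    push_neg at hpP
    obtain ⟨hpK, hpI, hpi, hps, hpj, hpt⟩ := hpP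
    have hpy : p ≠ y := fun h => hyK (h ▸ hpK)
    rcases Nat.lt_or_ge p i with h | h
    · have pA4 : p ∈ K \ (I ∪ {i, t}) := memA hpK hpI hpi hpt
      exact clash e4 pA4 iB4 sA4 h his iB4 sA4 yB4 his hsy
    · rcases Nat.lt_or_ge p y with h' | h'
      · have pA1 : p ∈ K \ (I ∪ {i, s}) := memA hpK hpI hpi hps
        exact clash e1 pA1 yB1 tA1 h' hyt iB1 pA1 yB1 (by omega) h'
      · have pA4 : p ∈ K \ (I ∪ {i, t}) := memA hpK hpI hpi hpt
        exact clash e4 sA4 yB4 pA4 hsy (by omega) iB4 sA4 yB4 his hsy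

lemma hardC2b1 (C : Ctx i s j t I K) {x z : ℕ}
    (hiK : i ∉ K) (hjK : j ∉ K)
    (hxK : x ∈ K) (hxI : x ∉ I) (hx1 : x ≠ i) (hx2 : x ≠ s) (hx3 : x ≠ j) (hx4 : x ≠ t)
    (hzK : z ∈ K) (hzI : z ∉ I) (hz1 : z ≠ i) (hz2 : z ≠ s) (hz3 : z ≠ j) (hz4 : z ≠ t)
    (hix : i < x) (hxj : x < j) (hjz : j < z) : False := by
  obtain ⟨his, hsj, hjt, hiI, hsI, hjI, htI, hcard, e1, e2, e3, e4⟩ := C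
  have hPQ : (K \ (I ∪ {i, s, j, t})).card + (K ∩ ({i, s, j, t} : Finset ℕ)).card
      = (I \ K).card + 2 :=
    cardPQ ⟨his, hsj, hjt, hiI, hsI, hjI, htI, hcard, e1, e2, e3, e4⟩
  have xA2 : x ∈ K \ (I ∪ {s, j}) := memA hxK hxI hx2 hx3
  have zA2 : z ∈ K \ (I ∪ {s, j}) := memA hzK hzI hz2 hz3
  have jB2 : j ∈ (I ∪ {s, j}) \ K := memB hjK (Or.inr (Or.inr rfl))
  rcases (I \ K).eq_empty_or_nonempty with hQ | ⟨q, hq⟩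
  · have hQ0 : (I \ K).card = 0 := by rw [hQ]; exact card_empty
    have hP2 : 2 ≤ (K \ (I ∪ {i, s, j, t})).card :=
      cardP2 (memP hxK hxI hx1 hx2 hx3 hx4) (memP hzK hzI hz1 hz2 hz3 hz4) (by omega)
    have hKS : K ∩ ({i, s, j, t} : Finset ℕ) = ∅ := card_eq_zero.1 (by omega)
    have htK : t ∉ K := by
      intro h
      have : t ∈ K ∩ ({i, s, j, t} : Finset ℕ) := mem_inter.2 ⟨h, by simp⟩
      rw [hKS] at this
      exact absurd this (notMem_empty t)
    rcases Nat.lt_or_ge z t with h | h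
    · have xA3 : x ∈ K \ (I ∪ {j, t}) := memA hxK hxI hx3 hx4
      have zA3 : z ∈ K \ (I ∪ {j, t}) := memA hzK hzI hz3 hz4
      have jB3 : j ∈ (I ∪ {j, t}) \ K := memB hjK (Or.inr (Or.inl rfl))
      have tB3 : t ∈ (I ∪ {j, t}) \ K := memB htK (Or.inr (Or.inr rfl))
      exact clash e3 xA3 jB3 zA3 hxj hjz jB3 zA3 tB3 hjz h
    · have xA4 : x ∈ K \ (I ∪ {i, t}) := memA hxK hxI hx1 hx4
      have zA4 : z ∈ K \ (I ∪ {i, t}) := memA hzK hzI hz1 hz4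
      have iB4 : i ∈ (I ∪ {i, t}) \ K := memB hiK (Or.inr (Or.inl rfl))
      have tB4 : t ∈ (I ∪ {i, t}) \ K := memB htK (Or.inr (Or.inr rfl))
      exact clash e4 xA4 tB4 zA4 (by omega) (by omega) iB4 xA4 tB4 hix (by omega)
  · obtain ⟨hqI, hqK⟩ := mem_sdiff.1 hq
    have hqx : q ≠ x := fun h => hqK (h ▸ hxK)
    have hqz : q ≠ z := fun h => hqK (h ▸ hzK)
    have qB2 : q ∈ (I ∪ {s, j}) \ K := memB hqK (Or.inl hqI)
    rcases Nat.lt_or_ge q x with h | h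
    · exact clash e2 xA2 jB2 zA2 hxj hjz qB2 xA2 jB2 h hxj
    · rcases Nat.lt_or_ge q z with h' | h'
      · exact noPQP ⟨his, hsj, hjt, hiI, hsI, hjI, htI, hcard, e1, e2, e3, e4⟩
          hiK (Or.inr (Or.inl rfl)) hxK hxI hx1 hx3 hjK (Or.inr (Or.inr rfl)) hix hxj
          hxK hxI hx1 hx2 hx3 hx4 hqI hqK hzK hzI hz1 hz2 hz3 hz4 (by omega) h'
      · exact clash e2 xA2 jB2 zA2 hxj hjz jB2 zA2 qB2 hjz (by omega)

lemma hardC2b2 (C : Ctx i s j t I K) {x : ℕ}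
    (hiK : i ∉ K) (hjK : j ∉ K) (htK : t ∈ K)
    (hxK : x ∈ K) (hxI : x ∉ I) (hx1 : x ≠ i) (hx2 : x ≠ s) (hx3 : x ≠ j) (hx4 : x ≠ t)
    (hix : i < x) (hxj : x < j) : False := by
  obtain ⟨his, hsj, hjt, hiI, hsI, hjI, htI, hcard, e1, e2, e3, e4⟩ := C
  have hPQ : (K \ (I ∪ {i, s, j, t})).card + (K ∩ ({i, s, j, t} : Finset ℕ)).card
      = (I \ K).card + 2 :=
    cardPQ ⟨his, hsj, hjt, hiI, hsI, hjI, htI, hcard, e1, e2, e3, e4⟩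
  have xA2 : x ∈ K \ (I ∪ {s, j}) := memA hxK hxI hx2 hx3
  have jB2 : j ∈ (I ∪ {s, j}) \ K := memB hjK (Or.inr (Or.inr rfl))
  have tA2 : t ∈ K \ (I ∪ {s, j}) := memA htK htI (by omega) (by omega)
  have xA1 : x ∈ K \ (I ∪ {i, s}) := memA hxK hxI hx1 hx2
  have tA1 : t ∈ K \ (I ∪ {i, s}) := memA htK htI (by omega) (by omega)
  have iB1 : i ∈ (I ∪ {i, s}) \ K := memB hiK (Or.inr (Or.inl rfl))
  rcases (I \ K).eq_empty_or_nonempty with hQ | ⟨q, hq⟩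
  · have hQ0 : (I \ K).card = 0 := by rw [hQ]; exact card_empty
    have hP1 : 1 ≤ (K \ (I ∪ {i, s, j, t})).card :=
      card_pos.2 ⟨x, memP hxK hxI hx1 hx2 hx3 hx4⟩
    have hsK : s ∉ K := by
      intro h
      have := cardS_gest (i := i) (j := j) h htK (by omega)
      omega
    rcases Nat.lt_or_ge x s with h | h
    · have sB1 : s ∈ (I ∪ {i, s}) \ K := memB hsK (Or.inr (Or.inr rfl))
      exact clash e1 xA1 sB1 tA1 h (by omega) iB1 xA1 sB1 hix h
    · have sB2 : s ∈ (I ∪ {s, j}) \ K := memB hsK (Or.inr (Or.inl rfl))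
      exact clash e2 xA2 jB2 tA2 hxj hjt sB2 xA2 jB2 (by omega) hxj
  · obtain ⟨hqI, hqK⟩ := mem_sdiff.1 hq
    have hqx : q ≠ x := fun h => hqK (h ▸ hxK)
    have hqt : q ≠ t := fun h => htI (h ▸ hqI)
    have qB1 : q ∈ (I ∪ {i, s}) \ K := memB hqK (Or.inl hqI)
    have qB2 : q ∈ (I ∪ {s, j}) \ K := memB hqK (Or.inl hqI)
    rcases Nat.lt_or_ge q x with h | h
    · exact clash e2 xA2 jB2 tA2 hxj hjt qB2 xA2 jB2 h hxj
    · rcases Nat.lt_or_ge q t with h' | h'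
      · exact clash e1 xA1 qB1 tA1 (by omega) h' iB1 xA1 qB1 hix (by omega)
      · exact clash e2 xA2 jB2 tA2 hxj hjt jB2 tA2 qB2 hjt (by omega)

lemma hardC2b3 (C : Ctx i s j t I K) {z : ℕ}
    (hiK : i ∉ K) (hjK : j ∉ K) (hsK : s ∈ K)
    (hzK : z ∈ K) (hzI : z ∉ I) (hz1 : z ≠ i) (hz2 : z ≠ s) (hz3 : z ≠ j) (hz4 : z ≠ t)
    (hjz : j < z) : False := by
  obtain ⟨his, hsj, hjt, hiI, hsI, hjI, htI, hcard, e1, e2, e3, e4⟩ := C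
  have hPQ : (K \ (I ∪ {i, s, j, t})).card + (K ∩ ({i, s, j, t} : Finset ℕ)).card
      = (I \ K).card + 2 :=
    cardPQ ⟨his, hsj, hjt, hiI, hsI, hjI, htI, hcard, e1, e2, e3, e4⟩
  have sA3 : s ∈ K \ (I ∪ {j, t}) := memA hsK hsI (by omega) (by omega)
  have jB3 : j ∈ (I ∪ {j, t}) \ K := memB hjK (Or.inr (Or.inl rfl))
  have zA3 : z ∈ K \ (I ∪ {j, t}) := memA hzK hzI hz3 hz4
  have sA4 : s ∈ K \ (I ∪ {i, t}) := memA hsK hsI (by omega) (by omega)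
  have zA4 : z ∈ K \ (I ∪ {i, t}) := memA hzK hzI hz1 hz4
  have iB4 : i ∈ (I ∪ {i, t}) \ K := memB hiK (Or.inr (Or.inl rfl))
  rcases (I \ K).eq_empty_or_nonempty with hQ | ⟨q, hq⟩
  · have hQ0 : (I \ K).card = 0 := by rw [hQ]; exact card_empty
    have hP1 : 1 ≤ (K \ (I ∪ {i, s, j, t})).card :=
      card_pos.2 ⟨z, memP hzK hzI hz1 hz2 hz3 hz4⟩
    have htK : t ∉ K := by
      intro h
      have := cardS_gest (i := i) (j := j) hsK h (by omega)
      omega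
    rcases Nat.lt_or_ge z t with h | h
    · have tB3 : t ∈ (I ∪ {j, t}) \ K := memB htK (Or.inr (Or.inr rfl))
      exact clash e3 sA3 jB3 zA3 hsj hjz jB3 zA3 tB3 hjz h
    · have tB4 : t ∈ (I ∪ {i, t}) \ K := memB htK (Or.inr (Or.inr rfl))
      exact clash e4 sA4 tB4 zA4 (by omega) (by omega) iB4 sA4 tB4 his (by omega)
  · obtain ⟨hqI, hqK⟩ := mem_sdiff.1 hq
    have hqs : q ≠ s := fun h => hsI (h ▸ hqI)
    have hqz : q ≠ z := fun h => hqK (h ▸ hzK)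
    have qB3 : q ∈ (I ∪ {j, t}) \ K := memB hqK (Or.inl hqI)
    have qB4 : q ∈ (I ∪ {i, t}) \ K := memB hqK (Or.inl hqI)
    rcases Nat.lt_or_ge q s with h | h
    · exact clash e3 sA3 jB3 zA3 hsj hjz qB3 sA3 jB3 h hsj
    · rcases Nat.lt_or_ge q z with h' | h'
      · exact clash e4 sA4 qB4 zA4 (by omega) h' iB4 sA4 qB4 his (by omega)
      · exact clash e3 sA3 jB3 zA3 hsj hjz jB3 zA3 qB3 hjz (by omega)

/-- The non-contradictory case: the alternation is exactly `i < s < j < t`.  Then `K`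
must equal `I ∪ {s,t}`. -/
lemma finalCase (C : Ctx i s j t I K)
    (hiK : i ∉ K) (hjK : j ∉ K) (hsK : s ∈ K) (htK : t ∈ K) : K = I ∪ {s, t} := by
  obtain ⟨his, hsj, hjt, hiI, hsI, hjI, htI, hcard, e1, e2, e3, e4⟩ := C
  have hPQ : (K \ (I ∪ {i, s, j, t})).card + (K ∩ ({i, s, j, t} : Finset ℕ)).card
      = (I \ K).card + 2 :=
    cardPQ ⟨his, hsj, hjt, hiI, hsI, hjI, htI, hcard, e1, e2, e3, e4⟩
  have hS2a := cardS_leij (s := s) (t := t) hiK hjK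
  have hS2b := cardS_gest (i := i) (j := j) hsK htK (by omega)
  have hnoq : ∀ q ∈ I, q ∈ K := by
    intro q hqI
    by_contra hqK
    have hQ1 := cardQ1 hqI hqK
    obtain ⟨p, hpK, hpI, hpi, hps, hpj, hpt⟩ := getP (i := i) (s := s) (j := j) (t := t)
      (I := I) (K := K) (by omega)
    have hqp : q ≠ p := fun h => hqK (h ▸ hpK)
    have hqs : q ≠ s := fun h => hsI (h ▸ hqI)
    have hqt : q ≠ t := fun h => htI (h ▸ hqI)
    have pA1 : p ∈ K \ (I ∪ {i, s}) := memA hpK hpI hpi hps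
    have pA2 : p ∈ K \ (I ∪ {s, j}) := memA hpK hpI hps hpj
    have pA3 : p ∈ K \ (I ∪ {j, t}) := memA hpK hpI hpj hpt
    have pA4 : p ∈ K \ (I ∪ {i, t}) := memA hpK hpI hpi hpt
    have qB1 : q ∈ (I ∪ {i, s}) \ K := memB hqK (Or.inl hqI)
    have qB2 : q ∈ (I ∪ {s, j}) \ K := memB hqK (Or.inl hqI)
    have qB3 : q ∈ (I ∪ {j, t}) \ K := memB hqK (Or.inl hqI)
    have qB4 : q ∈ (I ∪ {i, t}) \ K := memB hqK (Or.inl hqI)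
    have iB1 : i ∈ (I ∪ {i, s}) \ K := memB hiK (Or.inr (Or.inl rfl))
    have iB4 : i ∈ (I ∪ {i, t}) \ K := memB hiK (Or.inr (Or.inl rfl))
    have jB2 : j ∈ (I ∪ {s, j}) \ K := memB hjK (Or.inr (Or.inr rfl))
    have jB3 : j ∈ (I ∪ {j, t}) \ K := memB hjK (Or.inr (Or.inl rfl))
    have sA3 : s ∈ K \ (I ∪ {j, t}) := memA hsK hsI (by omega) (by omega)
    have sA4 : s ∈ K \ (I ∪ {i, t}) := memA hsK hsI (by omega) (by omega)
    have tA1 : t ∈ K \ (I ∪ {i, s}) := memA htK htI (by omega) (by omega)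
    have tA2 : t ∈ K \ (I ∪ {s, j}) := memA htK htI (by omega) (by omega)
    rcases Nat.lt_or_ge q p with h | h
    · rcases Nat.lt_or_ge p j with h1 | h1
      · exact clash e2 pA2 jB2 tA2 h1 hjt qB2 pA2 jB2 h h1
      · rcases Nat.lt_or_ge q s with h2 | h2
        · exact clash e3 sA3 jB3 pA3 hsj (by omega) qB3 sA3 jB3 h2 hsj
        · exact clash e4 sA4 qB4 pA4 (by omega) h iB4 sA4 qB4 his (by omega)
    · rcases Nat.lt_or_ge q s with h1 | h1
      · exact clash e3 pA3 qB3 sA3 (by omega) h1 qB3 sA3 jB3 h1 hsj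
      · rcases Nat.lt_or_ge p i with h2 | h2
        · exact clash e4 pA4 iB4 sA4 h2 his iB4 sA4 qB4 his (by omega)
        · rcases Nat.lt_or_ge q t with h3 | h3
          · exact clash e1 pA1 qB1 tA1 (by omega) h3 iB1 pA1 qB1 (by omega) (by omega)
          · rcases Nat.lt_or_ge p j with h4 | h4
            · exact clash e2 pA2 jB2 tA2 h4 hjt jB2 tA2 qB2 hjt (by omega)
            · exact clash e3 sA3 jB3 pA3 hsj (by omega) jB3 pA3 qB3 (by omega) (by omega)
  have hQ0 : I \ K = ∅ := by
    rw [eq_empty_iff_forall_notMem]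
    intro q hq
    obtain ⟨hqI, hqK⟩ := mem_sdiff.1 hq
    exact hqK (hnoq q hqI)
  have hP0 : K \ (I ∪ {i, s, j, t}) = ∅ := by
    rw [← card_eq_zero]
    rw [hQ0] at hPQ
    simp only [card_empty] at hPQ
    omega
  ext x
  simp only [mem_union, mem_insert, mem_singleton]
  constructor
  · intro hxK
    by_cases hxI : x ∈ I
    · exact Or.inl hxI
    by_cases hxs : x = s
    · exact Or.inr (Or.inl hxs)
    by_cases hxt : x = t
    · exact Or.inr (Or.inr hxt)
    by_cases hxi : x = i
    · exact absurd (hxi ▸ hxK) hiK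
    by_cases hxj : x = j
    · exact absurd (hxj ▸ hxK) hjK
    · have : x ∈ K \ (I ∪ {i, s, j, t}) := memP hxK hxI hxi hxs hxj hxt
      rw [hP0] at this
      exact absurd this (notMem_empty x)
  · rintro (hxI | rfl | rfl)
    · exact hnoq x hxI
    · exact hsK
    · exact htK

end Hard2
lemma splitA {K I : Finset ℕ} {a b u : ℕ} (h : u ∈ K \ (I ∪ {a, b})) :
    u ∈ K ∧ u ∉ I ∧ u ≠ a ∧ u ≠ b := by
  simp only [mem_sdiff, mem_union, mem_insert, mem_singleton] at h
  push_neg at h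
  exact ⟨h.1, h.2.1, h.2.2⟩

lemma splitB {K I : Finset ℕ} {a b u : ℕ} (h : u ∈ (I ∪ {a, b}) \ K) :
    u ∉ K ∧ (u ∈ I ∨ u = a ∨ u = b) := by
  simp only [mem_sdiff, mem_union, mem_insert, mem_singleton] at h
  exact ⟨h.2, h.1⟩

lemma notSf {A B : Finset ℕ} (h : ¬ Sf A B) :
    ∃ b ∈ B, ∃ a ∈ A, ∃ c ∈ A, a < b ∧ b < c := by
  by_contra hc
  push_neg at hc
  refine h (fun b hb a ha c hc2 hab hbc => ?_)
  exact absurd hbc (not_lt.mpr (hc b hb a ha c hc2 hab))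

theorem key1 {i s j t : ℕ} {I K : Finset ℕ}
    (his : i < s) (hsj : s < j) (hjt : j < t)
    (hiI : i ∉ I) (hsI : s ∉ I) (hjI : j ∉ I) (htI : t ∉ I)
    (hcard : K.card = I.card + 2)
    (w1 : WeaklySeparated K (I ∪ {i, s})) (w2 : WeaklySeparated K (I ∪ {s, j}))
    (w3 : WeaklySeparated K (I ∪ {j, t})) (w4 : WeaklySeparated K (I ∪ {i, t}))
    (hns : ¬ WeaklySeparated K (I ∪ {i, j})) : K = I ∪ {s, t} := by
  have e1 : EdgeOK K I i s :=
    (wseq (by rw [cardIab hiI hsI (by omega), hcard])).mp w1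
  have e2 : EdgeOK K I s j :=
    (wseq (by rw [cardIab hsI hjI (by omega), hcard])).mp w2
  have e3 : EdgeOK K I j t :=
    (wseq (by rw [cardIab hjI htI (by omega), hcard])).mp w3
  have e4 : EdgeOK K I i t :=
    (wseq (by rw [cardIab hiI htI (by omega), hcard])).mp w4
  have C : Ctx i s j t I K := ⟨his, hsj, hjt, hiI, hsI, hjI, htI, hcard, e1, e2, e3, e4⟩
  rw [wseq (by rw [cardIab hiI hjI (by omega), hcard])] at hns
  push_neg at hns
  obtain ⟨hn1, hn2⟩ := hns
  obtain ⟨b, hb, a, ha, c, hc, hab, hbc⟩ := notSf hn1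
  obtain ⟨e, he, d, hd, f, hf, hde, hef⟩ := notSf hn2
  -- b ∈ B₀, a c ∈ A₀ ; e ∈ A₀, d f ∈ B₀
  have hbe : b ≠ e := by
    intro h
    exact ((splitB hb).1) (h ▸ (splitA he).1)
  rcases Nat.lt_or_ge b e with hor | hor
  · -- alternation  a < b < e < f  of type (A,B,A,B)
    clear hn1 hn2 hd hde hc hbc
    obtain ⟨hwK, hwI, hwi, hwj⟩ := splitA ha
    obtain ⟨hyK, hyI, hyi, hyj⟩ := splitA he
    obtain ⟨hxK, hxB⟩ := splitB hb
    obtain ⟨hzK, hzB⟩ := splitB hf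
    -- rename for clarity:  w = a < x = b < y = e < z = f
    by_cases hws : a = s
    · by_cases hyt : e = t
      · rcases hxB with hxI | hxi | hxj
        · rcases hzB with hzI | hzi | hzj
          · exact absurd (hardC1a1 C (hws ▸ hwK) (hyt ▸ hyK) hxI hxK hzI hzK (by omega)
              (by omega) (by omega)) not_false
          · omega
          · omega
        · omega
        · rcases hzB with hzI | hzi | hzj
          · exact absurd (hardC1a2 C (hws ▸ hwK) (hyt ▸ hyK) (hxj ▸ hxK) hzI hzK
              (by omega)) not_false
          · omega
          · omega
      · by_cases hys : e = s
        · omega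
        · -- a = s, e free
          rcases hxB with hxI | hxi | hxj
          · rcases hzB with hzI | hzi | hzj
            · exact clash e4 (memA hwK hwI hwi (by omega)) (memB hxK (Or.inl hxI))
                (memA hyK hyI hyi hyt) hab hor (memB hxK (Or.inl hxI))
                (memA hyK hyI hyi hyt) (memB hzK (Or.inl hzI)) hor hef
            · omega
            · exact clash e3 (memA hwK hwI hwj (by omega)) (memB hxK (Or.inl hxI))
                (memA hyK hyI hyj hyt) hab hor (memB hxK (Or.inl hxI))
                (memA hyK hyI hyj hyt) (memB hzK (Or.inr (Or.inl hzj))) hor (by omega)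
          · omega
          · rcases hzB with hzI | hzi | hzj
            · exact clash e3 (memA hwK hwI hwj (by omega)) (memB hxK (Or.inr (Or.inl hxj)))
                (memA hyK hyI hyj hyt) hab hor (memB hxK (Or.inr (Or.inl hxj)))
                (memA hyK hyI hyj hyt) (memB hzK (Or.inl hzI)) hor hef
            · omega
            · omega
    · by_cases hwt : a = t
      · by_cases hys : e = s
        · omega
        · by_cases hyt : e = t
          · omega
          · rcases hxB with hxI | hxi | hxj
            · rcases hzB with hzI | hzi | hzj
              · exact clash e1 (memA hwK hwI hwi (by omega)) (memB hxK (Or.inl hxI))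
                  (memA hyK hyI hyi hys) hab hor (memB hxK (Or.inl hxI))
                  (memA hyK hyI hyi hys) (memB hzK (Or.inl hzI)) hor hef
              · omega
              · omega
            · omega
            · omega
      · by_cases hys : e = s
        · rcases hxB with hxI | hxi | hxj
          · rcases hzB with hzI | hzi | hzj
            · exact clash e4 (memA hwK hwI hwi hwt) (memB hxK (Or.inl hxI))
                (memA hyK hyI hyi (by omega)) hab hor (memB hxK (Or.inl hxI))
                (memA hyK hyI hyi (by omega)) (memB hzK (Or.inl hzI)) hor hef
            · omega
            · exact clash e3 (memA hwK hwI hwj hwt) (memB hxK (Or.inl hxI))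
                (memA hyK hyI (by omega) (by omega)) hab hor (memB hxK (Or.inl hxI))
                (memA hyK hyI (by omega) (by omega)) (memB hzK (Or.inr (Or.inl hzj)))
                hor (by omega)
          · rcases hzB with hzI | hzi | hzj
            · exact clash e4 (memA hwK hwI hwi hwt) (memB hxK (Or.inr (Or.inl hxi)))
                (memA hyK hyI hyi (by omega)) hab hor (memB hxK (Or.inr (Or.inl hxi)))
                (memA hyK hyI hyi (by omega)) (memB hzK (Or.inl hzI)) hor hef
            · omega
            · exact absurd (hardC1b2 C (hxi ▸ hxK) (hzj ▸ hzK) (hys ▸ hyK)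
                hwK hwI hwi hws hwj hwt (by omega)) not_false
          · omega
        · by_cases hyt : e = t
          · rcases hxB with hxI | hxi | hxj
            · rcases hzB with hzI | hzi | hzj
              · exact clash e1 (memA hwK hwI hwi hws) (memB hxK (Or.inl hxI))
                  (memA hyK hyI hyi (by omega)) hab hor (memB hxK (Or.inl hxI))
                  (memA hyK hyI hyi (by omega)) (memB hzK (Or.inl hzI)) hor hef
              · omega
              · omega
            · rcases hzB with hzI | hzi | hzj
              · exact clash e1 (memA hwK hwI hwi hws) (memB hxK (Or.inr (Or.inl hxi)))
                  (memA hyK hyI hyi (by omega)) hab hor (memB hxK (Or.inr (Or.inl hxi)))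
                  (memA hyK hyI hyi (by omega)) (memB hzK (Or.inl hzI)) hor hef
              · omega
              · omega
            · rcases hzB with hzI | hzi | hzj
              · exact clash e2 (memA hwK hwI hws hwj) (memB hxK (Or.inr (Or.inr hxj)))
                  (memA hyK hyI (by omega) (by omega)) hab hor
                  (memB hxK (Or.inr (Or.inr hxj))) (memA hyK hyI (by omega) (by omega))
                  (memB hzK (Or.inl hzI)) hor hef
              · omega
              · omega
          · -- a, e both free
            rcases hxB with hxI | hxi | hxj
            · rcases hzB with hzI | hzi | hzj
              · exact clash e1 (memA hwK hwI hwi hws) (memB hxK (Or.inl hxI))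
                  (memA hyK hyI hyi hys) hab hor (memB hxK (Or.inl hxI))
                  (memA hyK hyI hyi hys) (memB hzK (Or.inl hzI)) hor hef
              · exact clash e1 (memA hwK hwI hwi hws) (memB hxK (Or.inl hxI))
                  (memA hyK hyI hyi hys) hab hor (memB hxK (Or.inl hxI))
                  (memA hyK hyI hyi hys) (memB hzK (Or.inr (Or.inl hzi))) hor hef
              · exact clash e2 (memA hwK hwI hws hwj) (memB hxK (Or.inl hxI))
                  (memA hyK hyI hys hyj) hab hor (memB hxK (Or.inl hxI))
                  (memA hyK hyI hys hyj) (memB hzK (Or.inr (Or.inr hzj))) hor hef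
            · rcases hzB with hzI | hzi | hzj
              · exact clash e1 (memA hwK hwI hwi hws) (memB hxK (Or.inr (Or.inl hxi)))
                  (memA hyK hyI hyi hys) hab hor (memB hxK (Or.inr (Or.inl hxi)))
                  (memA hyK hyI hyi hys) (memB hzK (Or.inl hzI)) hor hef
              · omega
              · exact absurd (hardC1b1 C (hxi ▸ hxK) (hzj ▸ hzK)
                  hwK hwI hwi hws hwj hwt hyK hyI hyi hys hyj hyt
                  (by omega) (by omega) (by omega)) not_false
            · rcases hzB with hzI | hzi | hzj
              · exact clash e2 (memA hwK hwI hws hwj) (memB hxK (Or.inr (Or.inr hxj)))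
                  (memA hyK hyI hys hyj) hab hor (memB hxK (Or.inr (Or.inr hxj)))
                  (memA hyK hyI hys hyj) (memB hzK (Or.inl hzI)) hor hef
              · omega
              · omega
  · -- e < b : alternation  d < e < b < c  of type (B,A,B,A)
    have hor' : e < b := by omega
    clear hn1 hn2 ha hab hf hef hor
    obtain ⟨hxK, hxI, hxi, hxj⟩ := splitA he
    obtain ⟨hzK, hzI, hzi, hzj⟩ := splitA hc
    obtain ⟨hwK, hwB⟩ := splitB hd
    obtain ⟨hyK, hyB⟩ := splitB hb
    -- rename:  w = d < x = e < y = b < z = c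
    rcases hwB with hwI | hwi | hwj
    · rcases hyB with hyI | hyi | hyj
      · by_cases hxs : e = s
        · by_cases hzt : c = t
          · exact absurd (hardC2a1 C (hxs ▸ hxK) (hzt ▸ hzK) hwI hwK hyI hyK
              (by omega) (by omega) (by omega)) not_false
          · by_cases hzs : c = s
            · omega
            · exact clash e4 (memA hxK hxI hxi (by omega)) (memB hyK (Or.inl hyI))
                (memA hzK hzI hzi hzt) hor' hbc (memB hwK (Or.inl hwI))
                (memA hxK hxI hxi (by omega)) (memB hyK (Or.inl hyI)) hde hor'
        · by_cases hxt : e = t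
          · by_cases hzs : c = s
            · omega
            · by_cases hzt : c = t
              · omega
              · exact clash e1 (memA hxK hxI hxi (by omega)) (memB hyK (Or.inl hyI))
                  (memA hzK hzI hzi hzs) hor' hbc (memB hwK (Or.inl hwI))
                  (memA hxK hxI hxi (by omega)) (memB hyK (Or.inl hyI)) hde hor'
          · by_cases hzs : c = s
            · exact clash e4 (memA hxK hxI hxi hxt) (memB hyK (Or.inl hyI))
                (memA hzK hzI hzi (by omega)) hor' hbc (memB hwK (Or.inl hwI))
                (memA hxK hxI hxi hxt) (memB hyK (Or.inl hyI)) hde hor'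
            · by_cases hzt : c = t
              · exact clash e1 (memA hxK hxI hxi hxs) (memB hyK (Or.inl hyI))
                  (memA hzK hzI hzi (by omega)) hor' hbc (memB hwK (Or.inl hwI))
                  (memA hxK hxI hxi hxs) (memB hyK (Or.inl hyI)) hde hor'
              · exact clash e1 (memA hxK hxI hxi hxs) (memB hyK (Or.inl hyI))
                  (memA hzK hzI hzi hzs) hor' hbc (memB hwK (Or.inl hwI))
                  (memA hxK hxI hxi hxs) (memB hyK (Or.inl hyI)) hde hor'
      · -- y = i
        by_cases hxs : e = s
        · omega
        · by_cases hxt : e = t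
          · omega
          · by_cases hzs : c = s
            · exact clash e4 (memA hxK hxI hxi hxt) (memB hyK (Or.inr (Or.inl hyi)))
                (memA hzK hzI hzi (by omega)) hor' hbc (memB hwK (Or.inl hwI))
                (memA hxK hxI hxi hxt) (memB hyK (Or.inr (Or.inl hyi))) hde hor'
            · by_cases hzt : c = t
              · exact clash e1 (memA hxK hxI hxi hxs) (memB hyK (Or.inr (Or.inl hyi)))
                  (memA hzK hzI hzi (by omega)) hor' hbc (memB hwK (Or.inl hwI))
                  (memA hxK hxI hxi hxs) (memB hyK (Or.inr (Or.inl hyi))) hde hor'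
              · exact clash e1 (memA hxK hxI hxi hxs) (memB hyK (Or.inr (Or.inl hyi)))
                  (memA hzK hzI hzi hzs) hor' hbc (memB hwK (Or.inl hwI))
                  (memA hxK hxI hxi hxs) (memB hyK (Or.inr (Or.inl hyi))) hde hor'
      · -- y = j
        by_cases hxs : e = s
        · by_cases hzt : c = t
          · exact absurd (hardC2a2 C (hxs ▸ hxK) (hzt ▸ hzK) (hyj ▸ hyK) hwI hwK
              (by omega)) not_false
          · by_cases hzs : c = s
            · omega
            · exact clash e3 (memA hxK hxI (by omega) (by omega))
                (memB hyK (Or.inr (Or.inl hyj))) (memA hzK hzI hzj hzt) hor' hbc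
                (memB hwK (Or.inl hwI)) (memA hxK hxI (by omega) (by omega))
                (memB hyK (Or.inr (Or.inl hyj))) hde hor'
        · by_cases hxt : e = t
          · omega
          · by_cases hzs : c = s
            · omega
            · by_cases hzt : c = t
              · exact clash e2 (memA hxK hxI hxs hxj) (memB hyK (Or.inr (Or.inr hyj)))
                  (memA hzK hzI (by omega) (by omega)) hor' hbc (memB hwK (Or.inl hwI))
                  (memA hxK hxI hxs hxj) (memB hyK (Or.inr (Or.inr hyj))) hde hor'
              · exact clash e2 (memA hxK hxI hxs hxj) (memB hyK (Or.inr (Or.inr hyj)))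
                  (memA hzK hzI hzs hzj) hor' hbc (memB hwK (Or.inl hwI))
                  (memA hxK hxI hxs hxj) (memB hyK (Or.inr (Or.inr hyj))) hde hor'
    · -- w = i
      rcases hyB with hyI | hyi | hyj
      · by_cases hxs : e = s
        · by_cases hzt : c = t
          · exact absurd (hardC2a3 C (hxs ▸ hxK) (hzt ▸ hzK) (hwi ▸ hwK) hyI hyK
              (by omega) (by omega)) not_false
          · by_cases hzs : c = s
            · omega
            · exact clash e4 (memA hxK hxI hxi (by omega)) (memB hyK (Or.inl hyI))
                (memA hzK hzI hzi hzt) hor' hbc (memB hwK (Or.inr (Or.inl hwi)))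
                (memA hxK hxI hxi (by omega)) (memB hyK (Or.inl hyI)) hde hor'
        · by_cases hxt : e = t
          · by_cases hzs : c = s
            · omega
            · by_cases hzt : c = t
              · omega
              · exact clash e1 (memA hxK hxI hxi (by omega)) (memB hyK (Or.inl hyI))
                  (memA hzK hzI hzi hzs) hor' hbc (memB hwK (Or.inr (Or.inl hwi)))
                  (memA hxK hxI hxi (by omega)) (memB hyK (Or.inl hyI)) hde hor'
          · by_cases hzs : c = s
            · exact clash e4 (memA hxK hxI hxi hxt) (memB hyK (Or.inl hyI))
                (memA hzK hzI hzi (by omega)) hor' hbc (memB hwK (Or.inr (Or.inl hwi)))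
                (memA hxK hxI hxi hxt) (memB hyK (Or.inl hyI)) hde hor'
            · by_cases hzt : c = t
              · exact clash e1 (memA hxK hxI hxi hxs) (memB hyK (Or.inl hyI))
                  (memA hzK hzI hzi (by omega)) hor' hbc (memB hwK (Or.inr (Or.inl hwi)))
                  (memA hxK hxI hxi hxs) (memB hyK (Or.inl hyI)) hde hor'
              · exact clash e1 (memA hxK hxI hxi hxs) (memB hyK (Or.inl hyI))
                  (memA hzK hzI hzi hzs) hor' hbc (memB hwK (Or.inr (Or.inl hwi)))
                  (memA hxK hxI hxi hxs) (memB hyK (Or.inl hyI)) hde hor'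
      · omega
      · -- w = i, y = j
        by_cases hxs : e = s
        · by_cases hzt : c = t
          · exact finalCase C (hwi ▸ hwK) (hyj ▸ hyK) (hxs ▸ hxK) (hzt ▸ hzK)
          · by_cases hzs : c = s
            · omega
            · exact absurd (hardC2b3 C (hwi ▸ hwK) (hyj ▸ hyK) (hxs ▸ hxK)
                hzK hzI hzi hzs hzj hzt (by omega)) not_false
        · by_cases hxt : e = t
          · omega
          · by_cases hzs : c = s
            · omega
            · by_cases hzt : c = t
              · exact absurd (hardC2b2 C (hwi ▸ hwK) (hyj ▸ hyK) (hzt ▸ hzK)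
                  hxK hxI hxi hxs hxj hxt (by omega) (by omega)) not_false
              · exact absurd (hardC2b1 C (hwi ▸ hwK) (hyj ▸ hyK)
                  hxK hxI hxi hxs hxj hxt hzK hzI hzi hzs hzj hzt
                  (by omega) (by omega) (by omega)) not_false
    · -- w = j
      rcases hyB with hyI | hyi | hyj
      · by_cases hxs : e = s
        · omega
        · by_cases hxt : e = t
          · by_cases hzs : c = s
            · omega
            · by_cases hzt : c = t
              · omega
              · exact clash e2 (memA hxK hxI (by omega) hxj) (memB hyK (Or.inl hyI))
                  (memA hzK hzI hzs hzj) hor' hbc (memB hwK (Or.inr (Or.inr hwj)))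
                  (memA hxK hxI (by omega) hxj) (memB hyK (Or.inl hyI)) hde hor'
          · by_cases hzs : c = s
            · omega
            · by_cases hzt : c = t
              · exact clash e2 (memA hxK hxI hxs hxj) (memB hyK (Or.inl hyI))
                  (memA hzK hzI (by omega) (by omega)) hor' hbc
                  (memB hwK (Or.inr (Or.inr hwj))) (memA hxK hxI hxs hxj)
                  (memB hyK (Or.inl hyI)) hde hor'
              · exact clash e2 (memA hxK hxI hxs hxj) (memB hyK (Or.inl hyI))
                  (memA hzK hzI hzs hzj) hor' hbc (memB hwK (Or.inr (Or.inr hwj)))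
                  (memA hxK hxI hxs hxj) (memB hyK (Or.inl hyI)) hde hor'
      · omega
      · omega
section Reflect

variable {B : ℕ}

lemma r_card {X : Finset ℕ} (hX : ∀ x ∈ X, x ≤ B) :
    (X.image (fun x => B - x)).card = X.card :=
  card_image_of_injOn (fun a ha b hb h => by
    have := hX a ha; have := hX b hb; have h2 : B - a = B - b := h; omega)

lemma r_sdiff {X Y : Finset ℕ} (hX : ∀ x ∈ X, x ≤ B) (hY : ∀ y ∈ Y, y ≤ B) :
    X.image (fun x => B - x) \ Y.image (fun x => B - x) = (X \ Y).image (fun x => B - x) := by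
  ext z
  simp only [mem_sdiff, mem_image]
  constructor
  · rintro ⟨⟨x, hx, rfl⟩, h2⟩
    exact ⟨x, ⟨hx, fun hxY => h2 ⟨x, hxY, rfl⟩⟩, rfl⟩
  · rintro ⟨x, ⟨hxX, hxY⟩, rfl⟩
    refine ⟨⟨x, hxX, rfl⟩, ?_⟩
    rintro ⟨y, hyY, hEq⟩
    have hxB := hX x hxX
    have hyB := hY y hyY
    have : y = x := by omega
    exact hxY (this ▸ hyY)

lemma r_invo {X : Finset ℕ} (hX : ∀ x ∈ X, x ≤ B) :
    (X.image (fun x => B - x)).image (fun x => B - x) = X := by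
  ext z
  simp only [mem_image]
  constructor
  · rintro ⟨y, ⟨x, hx, rfl⟩, rfl⟩
    have := hX x hx
    have : B - (B - x) = x := by omega
    rwa [this]
  · intro hz
    refine ⟨B - z, ⟨z, hz, rfl⟩, ?_⟩
    have := hX z hz
    omega

lemma reflect_branch {X Y : Finset ℕ} (hX : ∀ x ∈ X, x ≤ B) (hY : ∀ y ∈ Y, y ≤ B)
    (hcd : Y.card ≤ X.card)
    (h : ∃ J₁ J₂ : Finset ℕ, Disjoint J₁ J₂ ∧ J₁ ∪ J₂ = Y \ X ∧
      Prec J₁ (X \ Y) ∧ Prec (X \ Y) J₂) :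
    (Y.image (fun x => B - x)).card ≤ (X.image (fun x => B - x)).card ∧
    ∃ J₁ J₂ : Finset ℕ, Disjoint J₁ J₂ ∧
      J₁ ∪ J₂ = Y.image (fun x => B - x) \ X.image (fun x => B - x) ∧
      Prec J₁ (X.image (fun x => B - x) \ Y.image (fun x => B - x)) ∧
      Prec (X.image (fun x => B - x) \ Y.image (fun x => B - x)) J₂ := by
  obtain ⟨J₁, J₂, hdisj, huni, h1, h2⟩ := h
  have hJ1 : ∀ x ∈ J₁, x ≤ B := by
    intro x hx
    have : x ∈ Y \ X := huni ▸ mem_union_left _ hx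
    exact hY x (mem_sdiff.1 this).1
  have hJ2 : ∀ x ∈ J₂, x ≤ B := by
    intro x hx
    have : x ∈ Y \ X := huni ▸ mem_union_right _ hx
    exact hY x (mem_sdiff.1 this).1
  refine ⟨by rw [r_card hX, r_card hY]; exact hcd,
    J₂.image (fun x => B - x), J₁.image (fun x => B - x), ?_, ?_, ?_, ?_⟩
  · rw [disjoint_left]
    intro z hz1 hz2
    obtain ⟨x, hx, hxe⟩ := mem_image.1 hz1
    obtain ⟨y, hy, hye⟩ := mem_image.1 hz2
    have := hJ2 x hx
    have := hJ1 y hy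
    have hyx : y = x := by omega
    exact (disjoint_left.1 hdisj (hyx ▸ hy)) hx
  · rw [r_sdiff hY hX, ← image_union, union_comm, huni]
  · rw [r_sdiff hX hY]
    intro z hz w hw
    obtain ⟨x, hx, hxe⟩ := mem_image.1 hz
    obtain ⟨y, hy, hye⟩ := mem_image.1 hw
    have hvu := h2 y hy x hx
    have := hJ2 x hx
    omega
  · rw [r_sdiff hX hY]
    intro z hz w hw
    obtain ⟨y, hy, hye⟩ := mem_image.1 hz
    obtain ⟨x, hx, hxe⟩ := mem_image.1 hw
    have hvu := h1 x hx y hy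
    have := hJ1 x hx
    have := hX y (mem_sdiff.1 hy).1
    omega

lemma ws_reflect {X Y : Finset ℕ} (hX : ∀ x ∈ X, x ≤ B) (hY : ∀ y ∈ Y, y ≤ B)
    (h : WeaklySeparated X Y) :
    WeaklySeparated (X.image (fun x => B - x)) (Y.image (fun x => B - x)) := by
  rcases h with ⟨hcd, hh⟩ | ⟨hcd, hh⟩
  · exact Or.inl (reflect_branch hX hY hcd hh)
  · exact Or.inr (reflect_branch hY hX hcd hh)

end Reflect

theorem key2 {i s j t : ℕ} {I K : Finset ℕ}
    (his : i < s) (hsj : s < j) (hjt : j < t)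
    (hiI : i ∉ I) (hsI : s ∉ I) (hjI : j ∉ I) (htI : t ∉ I)
    (hcard : K.card = I.card + 2)
    (w1 : WeaklySeparated K (I ∪ {i, s})) (w2 : WeaklySeparated K (I ∪ {s, j}))
    (w3 : WeaklySeparated K (I ∪ {j, t})) (w4 : WeaklySeparated K (I ∪ {i, t}))
    (hns : ¬ WeaklySeparated K (I ∪ {s, t})) : K = I ∪ {i, j} := by
  set B := (K ∪ I).sup id + t with hBdef
  have hBt : t ≤ B := Nat.le_add_left t _
  have hB : ∀ x ∈ K ∪ I, x ≤ B := fun x hx =>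
    le_trans (le_sup (f := id) hx) (Nat.le_add_right _ t)
  have hBK : ∀ x ∈ K, x ≤ B := fun x hx => hB x (mem_union_left _ hx)
  have hBI : ∀ x ∈ I, x ≤ B := fun x hx => hB x (mem_union_right _ hx)
  have hBe : ∀ a b : ℕ, a ≤ B → b ≤ B → ∀ x ∈ I ∪ {a, b}, x ≤ B := by
    intro a b ha hb x hx
    rcases mem_union.1 hx with h | h
    · exact hBI x h
    · rcases mem_insert.1 h with rfl | h
      · exact ha
      · rw [mem_singleton] at h
        omega
  have hiB : i ≤ B := by omega
  have hsB : s ≤ B := by omega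
  have hjB : j ≤ B := by omega
  -- images
  have himg : ∀ a b : ℕ, (I ∪ {a, b}).image (fun x => B - x)
      = I.image (fun x => B - x) ∪ {B - a, B - b} := by
    intro a b
    rw [image_union]
    congr 1
    rw [show ({a, b} : Finset ℕ) = insert a {b} from rfl, image_insert, image_singleton]
  have hInI : ∀ u, u ≤ B → u ∉ I → (B - u) ∉ I.image (fun x => B - x) := by
    intro u hu huI hmem
    obtain ⟨x, hxI, hx⟩ := mem_image.1 hmem
    have hxB := hBI x hxI
    have : x = u := by omega
    exact huI (this ▸ hxI)
  have hw3' : WeaklySeparated (K.image (fun x => B - x))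
      (I.image (fun x => B - x) ∪ {B - t, B - j}) := by
    have := ws_reflect hBK (hBe j t hjB hBt) w3
    rwa [himg j t, pair_comm] at this
  have hw2' : WeaklySeparated (K.image (fun x => B - x))
      (I.image (fun x => B - x) ∪ {B - j, B - s}) := by
    have := ws_reflect hBK (hBe s j hsB hjB) w2
    rwa [himg s j, pair_comm] at this
  have hw1' : WeaklySeparated (K.image (fun x => B - x))
      (I.image (fun x => B - x) ∪ {B - s, B - i}) := by
    have := ws_reflect hBK (hBe i s hiB hsB) w1
    rwa [himg i s, pair_comm] at this
  have hw4' : WeaklySeparated (K.image (fun x => B - x))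
      (I.image (fun x => B - x) ∪ {B - t, B - i}) := by
    have := ws_reflect hBK (hBe i t hiB hBt) w4
    rwa [himg i t, pair_comm] at this
  have hns' : ¬ WeaklySeparated (K.image (fun x => B - x))
      (I.image (fun x => B - x) ∪ {B - t, B - s}) := by
    intro hws
    apply hns
    have h2 : (I.image (fun x => B - x) ∪ {B - t, B - s})
        = (I ∪ {s, t}).image (fun x => B - x) := by
      rw [himg s t, pair_comm]
    rw [h2] at hws
    have := ws_reflect (B := B) (fun y hy => by
        obtain ⟨x, hx, rfl⟩ := mem_image.1 hy; omega)
      (fun y hy => by obtain ⟨x, hx, rfl⟩ := mem_image.1 hy; omega) hws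
    rwa [r_invo hBK, r_invo (hBe s t hsB hBt)] at this
  have hkey := key1 (i := B - t) (s := B - j) (j := B - s) (t := B - i)
    (by omega) (by omega) (by omega)
    (hInI t hBt htI) (hInI j hjB hjI) (hInI s hsB hsI) (hInI i hiB hiI)
    (by rw [r_card hBK, r_card hBI]; exact hcard)
    hw3' hw2' hw1' hw4' hns'
  -- hkey : K' = I' ∪ {B - j, B - i}
  have h2 : (I.image (fun x => B - x) ∪ {B - j, B - i})
      = (I ∪ {i, j}).image (fun x => B - x) := by
    rw [himg i j, pair_comm]
  rw [h2] at hkey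
  have := congrArg (fun X : Finset ℕ => X.image (fun x => B - x)) hkey
  rwa [r_invo hBK, r_invo (hBe i j hiB hjB)] at this
lemma ws_notsymm {X Y : Finset ℕ} (h : ¬ WeaklySeparated X Y) : ¬ WeaklySeparated Y X :=
  fun hws => h (ws_symm hws)

lemma diag_not_ws {i s j t : ℕ} {I : Finset ℕ} (his : i < s) (hsj : s < j) (hjt : j < t)
    (hiI : i ∉ I) (hsI : s ∉ I) (hjI : j ∉ I) (htI : t ∉ I) :
    ¬ WeaklySeparated (I ∪ {i, j}) (I ∪ {s, t}) := by
  intro h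
  rw [wseq (by rw [cardIab hiI hjI (by omega), cardIab hsI htI (by omega)])] at h
  have hiA : i ∈ (I ∪ {i, j}) \ (I ∪ {s, t}) := by
    simp only [mem_sdiff, mem_union, mem_insert, mem_singleton]
    constructor
    · tauto
    · push_neg
      exact ⟨hiI, by omega, by omega⟩
  have hjA : j ∈ (I ∪ {i, j}) \ (I ∪ {s, t}) := by
    simp only [mem_sdiff, mem_union, mem_insert, mem_singleton]
    constructor
    · tauto
    · push_neg
      exact ⟨hjI, by omega, by omega⟩
  have hsB : s ∈ (I ∪ {s, t}) \ (I ∪ {i, j}) := by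
    simp only [mem_sdiff, mem_union, mem_insert, mem_singleton]
    constructor
    · tauto
    · push_neg
      exact ⟨hsI, by omega, by omega⟩
  have htB : t ∈ (I ∪ {s, t}) \ (I ∪ {i, j}) := by
    simp only [mem_sdiff, mem_union, mem_insert, mem_singleton]
    constructor
    · tauto
    · push_neg
      exact ⟨htI, by omega, by omega⟩
  rcases h with h | h
  · exact h s hsB i hiA j hjA his hsj
  · exact h j hjA s hsB t htB hsj hjt

lemma replace_maximal {n k : ℕ} {𝒞 : Finset (Finset ℕ)} (hmax : MaximalWS n k 𝒞)
    {D N E1 E2 E3 E4 : Finset ℕ}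
    (hD : D ∈ 𝒞) (hN : IsKSubset n k N)
    (hE1 : E1 ∈ 𝒞) (hE2 : E2 ∈ 𝒞) (hE3 : E3 ∈ 𝒞) (hE4 : E4 ∈ 𝒞)
    (hE1D : E1 ≠ D) (hE2D : E2 ≠ D) (hE3D : E3 ≠ D) (hE4D : E4 ≠ D)
    (hND : ¬ WeaklySeparated N D)
    (hkey : ∀ M : Finset ℕ, IsKSubset n k M →
      WeaklySeparated M E1 → WeaklySeparated M E2 → WeaklySeparated M E3 →
      WeaklySeparated M E4 →
      (WeaklySeparated M D ∨ M = N) ∧ (WeaklySeparated M N ∨ M = D)) :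
    MaximalWS n k (insert N (𝒞.erase D)) := by
  obtain ⟨hm1, hm2, hm3⟩ := hmax
  have hWS_N : ∀ M ∈ 𝒞.erase D, WeaklySeparated M N := by
    intro M hM
    have hM𝒞 := mem_of_mem_erase hM
    have hMD := ne_of_mem_erase hM
    rcases (hkey M (hm1 M hM𝒞) (hm2 M hM𝒞 E1 hE1) (hm2 M hM𝒞 E2 hE2)
        (hm2 M hM𝒞 E3 hE3) (hm2 M hM𝒞 E4 hE4)).2 with h | h
    · exact h
    · exact absurd h hMD
  refine ⟨?_, ?_, ?_⟩
  · intro M hM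
    rcases mem_insert.1 hM with rfl | hM
    · exact hN
    · exact hm1 M (mem_of_mem_erase hM)
  · intro M hM M' hM'
    rcases mem_insert.1 hM with hMN | hM2
    · rcases mem_insert.1 hM' with hMN' | hM2'
      · rw [hMN, hMN']
        exact ws_refl N
      · rw [hMN]
        exact ws_symm (hWS_N M' hM2')
    · rcases mem_insert.1 hM' with hMN' | hM2'
      · rw [hMN']
        exact hWS_N M hM2
      · exact hm2 M (mem_of_mem_erase hM2) M' (mem_of_mem_erase hM2')
  · intro J hJ hws
    have hwsN : WeaklySeparated N J := hws N (mem_insert_self _ _)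
    have hJE : ∀ {E : Finset ℕ}, E ∈ 𝒞 → E ≠ D → WeaklySeparated J E := fun hE hED =>
      ws_symm (hws _ (mem_insert_of_mem (mem_erase.2 ⟨hED, hE⟩)))
    have hkJ := hkey J hJ (hJE hE1 hE1D) (hJE hE2 hE2D) (hJE hE3 hE3D) (hJE hE4 hE4D)
    rcases hkJ.1 with hJD | rfl
    · have hJ𝒞 : J ∈ 𝒞 := by
        apply hm3 J hJ
        intro M hM
        by_cases hMD : M = D
        · rw [hMD]
          exact ws_symm hJD
        · exact ws_symm (hJE hM hMD)
      have hJD' : J ≠ D := by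
        rintro rfl
        exact hND hwsN
      exact mem_insert_of_mem (mem_erase.2 ⟨hJD', hJ𝒞⟩)
    · exact mem_insert_self _ _

/-- **Theorem 3, second part.** The `(2,4)`-move preserves weak separability
and maximality. -/
theorem move_preserves_maximal (n k : ℕ) (𝒞 : Finset (Finset ℕ)) (hmax : MaximalWS n k 𝒞)
    (i s j t : ℕ)
    (hi : i ∈ Finset.Icc 1 n) (hs : s ∈ Finset.Icc 1 n)
    (hj : j ∈ Finset.Icc 1 n) (ht : t ∈ Finset.Icc 1 n)
    (his : i < s) (hsj : s < j) (hjt : j < t)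
    (I : Finset ℕ) (hI : I ⊆ Finset.Icc 1 n \ {i, s, j, t}) (hIc : I.card = k - 2)
    (m₁ : I ∪ {i, s} ∈ 𝒞) (m₂ : I ∪ {s, j} ∈ 𝒞)
    (m₃ : I ∪ {j, t} ∈ 𝒞) (m₄ : I ∪ {i, t} ∈ 𝒞) :
    (I ∪ {i, j} ∈ 𝒞 →
      MaximalWS n k (insert (I ∪ {s, t}) (𝒞.erase (I ∪ {i, j})))) ∧
    (I ∪ {s, t} ∈ 𝒞 →
      MaximalWS n k (insert (I ∪ {i, j}) (𝒞.erase (I ∪ {s, t})))) := by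
  have hIdisj : ∀ x ∈ I, x ≠ i ∧ x ≠ s ∧ x ≠ j ∧ x ≠ t := by
    intro x hx
    have h := hI hx
    simp only [Finset.mem_sdiff, Finset.mem_insert, Finset.mem_singleton] at h
    push_neg at h
    exact h.2
  have hiI : i ∉ I := fun h => (hIdisj i h).1 rfl
  have hsI : s ∉ I := fun h => (hIdisj s h).2.1 rfl
  have hjI : j ∉ I := fun h => (hIdisj j h).2.2.1 rfl
  have htI : t ∉ I := fun h => (hIdisj t h).2.2.2 rfl
  have hkc : k = I.card + 2 := by
    have h1 := (hmax.1 _ m₁).2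
    have h2 : (I ∪ {i, s}).card = I.card + 2 := cardIab hiI hsI (by omega)
    omega
  have hsub : ∀ a b : ℕ, a ∈ Finset.Icc 1 n → b ∈ Finset.Icc 1 n → a ∉ I → b ∉ I →
      a ≠ b → IsKSubset n k (I ∪ {a, b}) := by
    intro a b ha hb haI hbI hab
    constructor
    · intro x hx
      rcases mem_union.1 hx with h | h
      · exact (mem_sdiff.1 (hI h)).1
      · rcases mem_insert.1 h with rfl | h
        · exact ha
        · rw [mem_singleton] at h
          rw [h]
          exact hb
    · rw [cardIab haI hbI hab]
      omega
  have hkey : ∀ M : Finset ℕ, IsKSubset n k M →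
      WeaklySeparated M (I ∪ {i, s}) → WeaklySeparated M (I ∪ {s, j}) →
      WeaklySeparated M (I ∪ {j, t}) → WeaklySeparated M (I ∪ {i, t}) →
      (WeaklySeparated M (I ∪ {i, j}) ∨ M = I ∪ {s, t}) ∧
      (WeaklySeparated M (I ∪ {s, t}) ∨ M = I ∪ {i, j}) := by
    intro M hM hw1 hw2 hw3 hw4
    have hMc : M.card = I.card + 2 := by
      have := hM.2
      omega
    constructor
    · by_cases h : WeaklySeparated M (I ∪ {i, j})
      · exact Or.inl h
      · exact Or.inr (key1 his hsj hjt hiI hsI hjI htI hMc hw1 hw2 hw3 hw4 h)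
    · by_cases h : WeaklySeparated M (I ∪ {s, t})
      · exact Or.inl h
      · exact Or.inr (key2 his hsj hjt hiI hsI hjI htI hMc hw1 hw2 hw3 hw4 h)
  have hnem : ∀ x a b : ℕ, x ∉ I → x ≠ a → x ≠ b → x ∉ I ∪ ({a, b} : Finset ℕ) := by
    intro x a b h1 h2 h3 hx
    simp only [mem_union, mem_insert, mem_singleton] at hx
    tauto
  have hmem2 : ∀ a b : ℕ, b ∈ I ∪ ({a, b} : Finset ℕ) := by
    intro a b
    simp only [mem_union, mem_insert, mem_singleton]
    tauto
  have hmem1 : ∀ a b : ℕ, a ∈ I ∪ ({a, b} : Finset ℕ) := by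
    intro a b
    simp only [mem_union, mem_insert, mem_singleton]
    tauto
  have hne : ∀ {X Y : Finset ℕ} (x : ℕ), x ∈ X → x ∉ Y → X ≠ Y :=
    fun x hx hy he => hy (he ▸ hx)
  constructor
  · intro hD
    exact replace_maximal hmax hD (hsub s t hs ht hsI htI (by omega)) m₁ m₂ m₃ m₄
      (hne s (hmem2 i s) (hnem s i j hsI (by omega) (by omega)))
      (hne s (hmem1 s j) (hnem s i j hsI (by omega) (by omega)))
      (hne t (hmem2 j t) (hnem t i j htI (by omega) (by omega)))
      (hne t (hmem2 i t) (hnem t i j htI (by omega) (by omega)))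
      (ws_notsymm (diag_not_ws his hsj hjt hiI hsI hjI htI))
      hkey
  · intro hD
    have hkey' : ∀ M : Finset ℕ, IsKSubset n k M →
        WeaklySeparated M (I ∪ {i, s}) → WeaklySeparated M (I ∪ {s, j}) →
        WeaklySeparated M (I ∪ {j, t}) → WeaklySeparated M (I ∪ {i, t}) →
        (WeaklySeparated M (I ∪ {s, t}) ∨ M = I ∪ {i, j}) ∧
        (WeaklySeparated M (I ∪ {i, j}) ∨ M = I ∪ {s, t}) := by
      intro M hM hw1 hw2 hw3 hw4
      exact ⟨(hkey M hM hw1 hw2 hw3 hw4).2, (hkey M hM hw1 hw2 hw3 hw4).1⟩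
    exact replace_maximal hmax hD (hsub i j hi hj hiI hjI (by omega)) m₁ m₂ m₃ m₄
      (hne i (hmem1 i s) (hnem i s t hiI (by omega) (by omega)))
      (hne j (hmem2 s j) (hnem j s t hjI (by omega) (by omega)))
      (hne j (hmem1 j t) (hnem j s t hjI (by omega) (by omega)))
      (hne i (hmem1 i t) (hnem i s t hiI (by omega) (by omega)))
      (diag_not_ws his hsj hjt hiI hsI hjI htI)
      hkey'
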